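/- arXiv:1901.10335 — 5 statements merged into one kernel-verified Lean document; each statement's English description precedes it below -/
import Mathlib

section
/- The dual SDP (D) is strictly feasible: there exists a dual vector y with y_{ij} < 0 for all i ∈ {1,…,n}, j ∈ {l_i,…,u_i}, such that Q − 𝒜ᵀy is positive definite. -/
noncomputable def A0mat (n : ℕ) : Matrix (Fin (n + 1)) (Fin (n + 1)) ℝ :=
  fun k m => if k = 0 ∧ m = 0 then 1 else 0

noncomputable def Aconstr (n : ℕ) (l u : Fin n → ℤ) (β : Fin n → ℤ → ℝ)
    (i : Fin n) (j : ℤ) : Matrix (Fin (n + 1)) (Fin (n + 1)) ℝ :=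
  fun k m =>
    if k = 0 then
      if m = 0 then
        (if j = u i then β i j + (l i : ℝ) * (u i : ℝ)
         else β i j - (j : ℝ) * ((j : ℝ) + 1))
      else if m = i.succ then
        (if j = u i then -((l i : ℝ) + (u i : ℝ)) / 2 else (j : ℝ) + 1 / 2)
      else 0
    else if k = i.succ then
      if m = 0 then
        (if j = u i then -((l i : ℝ) + (u i : ℝ)) / 2 else (j : ℝ) + 1 / 2)
      else if m = i.succ then (if j = u i then (1 : ℝ) else -1)
      else 0
    else 0

noncomputable def ATy (n : ℕ) (l u : Fin n → ℤ) (β : Fin n → ℤ → ℝ)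
    (y0 : ℝ) (yv : Fin n → ℤ → ℝ) : Matrix (Fin (n + 1)) (Fin (n + 1)) ℝ :=
  y0 • A0mat n + ∑ i : Fin n, ∑ j ∈ Finset.Icc (l i) (u i), yv i j • Aconstr n l u β i j

noncomputable def bdot (n : ℕ) (l u : Fin n → ℤ) (β : Fin n → ℤ → ℝ)
    (y0 : ℝ) (yv : Fin n → ℤ → ℝ) : ℝ :=
  y0 + ∑ i : Fin n, ∑ j ∈ Finset.Icc (l i) (u i), β i j * yv i j

/-!
Every `A_{ij}` is an arrow matrix: besides the corner `(0,0)` it has entries only in row and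
column `0` and on the diagonal. So is `𝒜ᵀy`, and its diagonal entry `(i,i)` is
`Σ_j y_{ij} (A_{ij})_{ii}`, which the negative weights `y_{ij} = -t` on the `u_i - l_i` lower
facets and `y_{iu_i} = -t (u_i - l_i + 1)` on the upper facet make equal to `-t`. Taking
`t > Σ_{k,m} |Q_{km}|`, the matrix `Q - 𝒜ᵀy` is the positive semidefinite matrix
`Q + (Σ_{k,m} |Q_{km}|) I` plus an arrow matrix with positive diagonal, and the latter is
positive definite once its corner entry beats the Schur complement, which the free variable `y_0`
arranges.
-/

open Matrix Finset

namespace Matrix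

variable {R : Type*} {n : ℕ}

def arrowMatrix [Zero R] (a : R) (v d : Fin n → R) : Matrix (Fin (n + 1)) (Fin (n + 1)) R :=
  of (Fin.cons (Fin.cons a v) fun p => Fin.cons (v p) (diagonal d p))

section Entries

variable [Zero R] (a : R) (v d : Fin n → R)

@[simp] lemma arrowMatrix_zero_zero : arrowMatrix a v d 0 0 = a := rfl

@[simp] lemma arrowMatrix_zero_succ (q : Fin n) : arrowMatrix a v d 0 q.succ = v q := rfl

@[simp] lemma arrowMatrix_succ_zero (p : Fin n) : arrowMatrix a v d p.succ 0 = v p := rfl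

@[simp] lemma arrowMatrix_succ_succ (p q : Fin n) :
    arrowMatrix a v d p.succ q.succ = diagonal d p q := rfl

end Entries

lemma arrowMatrix_isHermitian [Ring R] [StarRing R] [TrivialStar R] (a : R) (v d : Fin n → R) :
    (arrowMatrix a v d).IsHermitian := by
  ext k m
  cases k using Fin.cases <;> cases m using Fin.cases <;>
    simp only [conjTranspose_apply, star_trivial, arrowMatrix_zero_zero, arrowMatrix_zero_succ,
      arrowMatrix_succ_zero, arrowMatrix_succ_succ]
  exact congrFun (congrFun (diagonal_transpose d) _) _

lemma dotProduct_arrowMatrix_mulVec [CommRing R] (a : R) (v d : Fin n → R)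
    (x : Fin (n + 1) → R) :
    x ⬝ᵥ (arrowMatrix a v d *ᵥ x) =
      a * x 0 ^ 2 + ∑ p, (2 * v p * x 0 * x p.succ + d p * x p.succ ^ 2) := by
  simp only [dotProduct, mulVec, Fin.sum_univ_succ, arrowMatrix_zero_zero, arrowMatrix_zero_succ,
    arrowMatrix_succ_zero, arrowMatrix_succ_succ, diagonal_apply, ite_mul, zero_mul, sum_ite_eq,
    mem_univ, ↓reduceIte]
  rw [mul_add, mul_sum, add_assoc, ← sum_add_distrib]
  congr 1
  · ring
  · exact sum_congr rfl fun p _ => by ring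

lemma arrowMatrix_posDef {a : ℝ} {v d : Fin n → ℝ} (hd : ∀ p, 0 < d p)
    (ha : ∑ p, v p ^ 2 / d p < a) : (arrowMatrix a v d).PosDef := by
  refine .of_dotProduct_mulVec_pos (arrowMatrix_isHermitian a v d) fun x hx => ?_
  have complete_square : ∀ p, 2 * v p * x 0 * x p.succ + d p * x p.succ ^ 2 =
      d p * (x p.succ + v p / d p * x 0) ^ 2 - v p ^ 2 / d p * x 0 ^ 2 := fun p => by
    field_simp [(hd p).ne']
    ring
  rw [star_trivial, dotProduct_arrowMatrix_mulVec, sum_congr rfl fun p _ => complete_square p,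
    sum_sub_distrib, ← sum_mul]
  have squares_nonneg : 0 ≤ ∑ q, d q * (x q.succ + v q / d q * x 0) ^ 2 :=
    sum_nonneg fun q _ => mul_nonneg (hd q).le (sq_nonneg _)
  by_cases h0 : x 0 = 0
  · obtain ⟨p, hp⟩ : ∃ p : Fin n, x p.succ ≠ 0 := by
      by_contra! h
      exact hx (funext fun k => Fin.cases h0 h k)
    have : 0 < ∑ q, d q * (x q.succ + v q / d q * x 0) ^ 2 :=
      sum_pos' (fun q _ => mul_nonneg (hd q).le (sq_nonneg _))
        ⟨p, mem_univ p, by simpa [h0] using mul_pos (hd p) (sq_pos_of_ne_zero hp)⟩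
    simpa [h0] using this
  · have : 0 < (a - ∑ p, v p ^ 2 / d p) * x 0 ^ 2 := by
      have := sub_pos.2 ha
      positivity
    linarith

lemma abs_mul_le_dotProduct_self {m : Type*} [Fintype m] (x : m → ℝ) (k l : m) :
    |x k * x l| ≤ x ⬝ᵥ x := by
  have hk : x k ^ 2 ≤ x ⬝ᵥ x := by
    simpa [dotProduct, sq] using single_le_sum (fun i _ => mul_self_nonneg (x i)) (mem_univ k)
  have hl : x l ^ 2 ≤ x ⬝ᵥ x := by
    simpa [dotProduct, sq] using single_le_sum (fun i _ => mul_self_nonneg (x i)) (mem_univ l)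
  rw [abs_mul]
  nlinarith [sq_nonneg (|x k| - |x l|), sq_abs (x k), sq_abs (x l)]

lemma IsHermitian.posSemidef_add_smul_one {m : Type*} [Fintype m] [DecidableEq m]
    {Q : Matrix m m ℝ} (hQ : Q.IsHermitian) :
    (Q + (∑ k, ∑ l, |Q k l|) • 1).PosSemidef := by
  set C := ∑ k, ∑ l, |Q k l|
  have hC : 0 ≤ C := by positivity
  refine .of_dotProduct_mulVec_nonneg (hQ.add (PosSemidef.one.smul hC).isHermitian) fun x => ?_
  have hQx : x ⬝ᵥ (Q *ᵥ x) = ∑ k, ∑ l, Q k l * (x k * x l) := by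
    simp only [dotProduct, mulVec, mul_sum]
    exact sum_congr rfl fun k _ => sum_congr rfl fun l _ => by ring
  have bound : -(C * (x ⬝ᵥ x)) ≤ x ⬝ᵥ (Q *ᵥ x) := by
    rw [hQx, sum_mul, ← sum_neg_distrib]
    refine sum_le_sum fun k _ => ?_
    rw [sum_mul, ← sum_neg_distrib]
    refine sum_le_sum fun l _ => ?_
    calc -(|Q k l| * (x ⬝ᵥ x)) ≤ -|Q k l * (x k * x l)| := by
          rw [abs_mul, neg_le_neg_iff]
          exact mul_le_mul_of_nonneg_left (abs_mul_le_dotProduct_self x k l) (abs_nonneg _)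
      _ ≤ Q k l * (x k * x l) := neg_abs_le _
  rw [star_trivial, add_mulVec, dotProduct_add, smul_mulVec, one_mulVec, dotProduct_smul,
    smul_eq_mul]
  linarith

lemma exists_posDef_sub_arrowMatrix {Q : Matrix (Fin (n + 1)) (Fin (n + 1)) ℝ} {C : ℝ}
    (hQ : (Q + C • 1).PosSemidef) (v : Fin n → ℝ) {d : Fin n → ℝ} (hd : ∀ p, d p < -C) :
    ∃ a, (Q - arrowMatrix a v d).PosDef := by
  set a := -C - ∑ p, v p ^ 2 / (-C - d p) - 1
  have hsplit : Q - arrowMatrix a v d =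
      (Q + C • 1) + arrowMatrix (-C - a) (-v) (fun p => -C - d p) := by
    ext k m
    cases k using Fin.cases <;> cases m using Fin.cases <;>
      simp only [sub_apply, add_apply, smul_apply, smul_eq_mul, arrowMatrix_zero_zero,
        arrowMatrix_zero_succ, arrowMatrix_succ_zero, arrowMatrix_succ_succ, diagonal_apply,
        one_apply, Fin.succ_inj, Fin.succ_ne_zero, (Fin.succ_ne_zero _).symm, Pi.neg_apply,
        ↓reduceIte]
    all_goals (try split_ifs) <;> ring
  refine ⟨a, hsplit ▸ PosDef.posSemidef_add hQ
    (arrowMatrix_posDef (fun p => by linarith [hd p]) ?_)⟩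
  simp only [a, Pi.neg_apply, neg_sq]
  linarith

end Matrix

lemma ATy_eq_arrowMatrix (n : ℕ) (l u : Fin n → ℤ) (β : Fin n → ℤ → ℝ) (y0 : ℝ)
    (yv : Fin n → ℤ → ℝ) :
    ATy n l u β y0 yv = arrowMatrix
      (y0 + ∑ i, ∑ j ∈ Icc (l i) (u i), yv i j * Aconstr n l u β i j 0 0)
      (fun p => ∑ j ∈ Icc (l p) (u p), yv p j * Aconstr n l u β p j 0 p.succ)
      (fun p => ∑ j ∈ Icc (l p) (u p), yv p j * Aconstr n l u β p j p.succ p.succ) := by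
  ext k m
  cases k using Fin.cases <;> cases m using Fin.cases <;>
    simp [ATy, A0mat, Aconstr, Matrix.sum_apply, diagonal_apply, Fin.succ_ne_zero, eq_comm]

def facetWeight {n : ℕ} (l u : Fin n → ℤ) (i : Fin n) (j : ℤ) : ℝ :=
  if j = u i then -((u i - l i + 1 : ℤ) : ℝ) else -1

lemma facetWeight_neg {n : ℕ} {l u : Fin n → ℤ} {i : Fin n} {j : ℤ}
    (hj : j ∈ Icc (l i) (u i)) : facetWeight l u i j < 0 := by
  obtain ⟨hlj, hju⟩ := mem_Icc.1 hj
  unfold facetWeight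
  split_ifs
  · exact neg_neg_of_pos (Int.cast_pos.2 (by omega))
  · norm_num

lemma sum_facetWeight_mul_Aconstr_succ_succ {n : ℕ} (l u : Fin n → ℤ) (β : Fin n → ℤ → ℝ)
    {i : Fin n} (h : l i ≤ u i) :
    ∑ j ∈ Icc (l i) (u i), facetWeight l u i j * Aconstr n l u β i j i.succ i.succ = -1 := by
  have upper : facetWeight l u i (u i) * Aconstr n l u β i (u i) i.succ i.succ =
      -((u i - l i + 1 : ℤ) : ℝ) := by
    simp [facetWeight, Aconstr, Fin.succ_ne_zero]
  have lower : ∀ j ∈ Ico (l i) (u i),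
      facetWeight l u i j * Aconstr n l u β i j i.succ i.succ = 1 := fun j hj => by
    simp [facetWeight, Aconstr, (mem_Ico.1 hj).2.ne, Fin.succ_ne_zero]
  rw [Icc_eq_cons_Ico h, sum_cons, upper, sum_congr rfl lower, sum_const, Int.card_Ico,
    nsmul_one, ← Int.cast_natCast, Int.toNat_of_nonneg (sub_nonneg.2 h)]
  push_cast
  ring

theorem stmt4_general (n : ℕ) (l u : Fin n → ℤ) (hlu : ∀ i, l i < u i)
    (β : Fin n → ℤ → ℝ) (Q : Matrix (Fin (n + 1)) (Fin (n + 1)) ℝ)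
    (hQ : Q.IsHermitian) :
    ∃ (y0 : ℝ) (yv : Fin n → ℤ → ℝ),
      (∀ i : Fin n, ∀ j ∈ Finset.Icc (l i) (u i), yv i j < 0) ∧
      (Q - ATy n l u β y0 yv).PosDef := by
  set C := ∑ k, ∑ m, |Q k m|
  set yv : Fin n → ℤ → ℝ := fun i j => (C + 1) * facetWeight l u i j
  have hdiag : ∀ p,
      ∑ j ∈ Icc (l p) (u p), yv p j * Aconstr n l u β p j p.succ p.succ = -(C + 1) := fun p => by
    simp only [yv, mul_assoc, ← mul_sum, sum_facetWeight_mul_Aconstr_succ_succ l u β (hlu p).le,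
      mul_neg_one]
  obtain ⟨a, ha⟩ := exists_posDef_sub_arrowMatrix hQ.posSemidef_add_smul_one
    (fun p => ∑ j ∈ Icc (l p) (u p), yv p j * Aconstr n l u β p j 0 p.succ)
    (d := fun p => ∑ j ∈ Icc (l p) (u p), yv p j * Aconstr n l u β p j p.succ p.succ)
    (fun p => by simp only [hdiag]; linarith)
  refine ⟨a - ∑ i, ∑ j ∈ Icc (l i) (u i), yv i j * Aconstr n l u β i j 0 0, yv,
    fun i j hj => mul_neg_of_pos_of_neg (by positivity) (facetWeight_neg hj), ?_⟩
  rw [ATy_eq_arrowMatrix, sub_add_cancel]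
  exact ha

theorem stmt4 (n : ℕ) (hn : 1 ≤ n) (l u : Fin n → ℤ) (hlu : ∀ i, l i < u i)
    (β : Fin n → ℤ → ℝ) (Q : Matrix (Fin (n + 1)) (Fin (n + 1)) ℝ)
    (hQ : Q.IsHermitian) :
    ∃ (y0 : ℝ) (yv : Fin n → ℤ → ℝ),
      (∀ i : Fin n, ∀ j ∈ Finset.Icc (l i) (u i), yv i j < 0) ∧
      (Q - ATy n l u β y0 yv).PosDef :=
  stmt4_general n l u hlu β Q hQ
end

section
/- Fix σ > 0 and a point y feasible for the barrier problem (Q − 𝒜ᵀy positive definite, y_{ij} ≤ 0 for all i, j), and fix a coordinate ij. Let φ(s) = f(y + s·e_{ij}; σ). (i) Suppose ∂f/∂y_{ij}(y; σ) > 0 and y_{ij} < 0. If there exists s ≥ 0 with φ'(s) = 0, then for the smallest s⁺ ≥ 0 with φ'(s⁺) = 0 one of the following holds: (a) y + s⁺ e_{ij} is feasible for the barrier problem; or (b) s⁺ > −y_{ij}, the point y − y_{ij} e_{ij} is feasible for the barrier problem, and φ'(−y_{ij}) > 0. (ii) Suppose ∂f/∂y_{ij}(y; σ) < 0. If there exists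 s ≤ 0 with φ'(s) = 0, then for the largest s⁻ ≤ 0 with φ'(s⁻) = 0, the point y + s⁻ e_{ij} is feasible for the barrier problem. -/
noncomputable def lsGrad (n : ℕ) (l u : Fin n → ℤ) (β : Fin n → ℤ → ℝ)
    (Q : Matrix (Fin (n + 1)) (Fin (n + 1)) ℝ) (σ y0 : ℝ) (yv : Fin n → ℤ → ℝ)
    (i : Fin n) (j : ℤ) (s : ℝ) : ℝ :=
  β i j - σ * (Aconstr n l u β i j *
      (Q - ATy n l u β y0 yv - s • Aconstr n l u β i j)⁻¹).trace

/-! The step lengths `s` for which `Q - 𝒜ᵀy - s • A_ij` is positive definite form an interval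
(positive definiteness survives convex combinations), on which `φ'` is continuous because matrix
inversion is. Between `0` and a given zero of `φ'` the zero set is thus compact, so a first (last)
zero exists. In (i), if the first zero `s⁺` lies beyond `-y_ij`, then `-y_ij` is still in the
interval and `φ'(-y_ij) > 0`, since otherwise the intermediate value theorem, started from
`φ'(0) > 0`, would produce an earlier zero. In (ii), `s⁻ ≤ 0` and `y_ij ≤ 0` give feasibility. -/

open Set

theorem Matrix.convex_setOf_posDef_sub_smul {ι : Type*} [Fintype ι] (P A : Matrix ι ι ℝ) :
    Convex ℝ {s : ℝ | (P - s • A).PosDef} := by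
  refine convex_iff_forall_pos.2 fun a ha b hb t₁ t₂ ht₁ ht₂ ht => ?_
  have hcomb : P - (t₁ • a + t₂ • b) • A = t₁ • (P - a • A) + t₂ • (P - b • A) := by
    conv_lhs => rw [← one_smul ℝ P, ← ht]
    module
  show (P - _ • A).PosDef
  rw [hcomb]
  exact (ha.smul ht₁).add (hb.smul ht₂)

theorem Matrix.continuousAt_inv_sub_smul {ι : Type*} [Fintype ι] [DecidableEq ι]
    {P A : Matrix ι ι ℝ} {s : ℝ} (hs : (P - s • A).det ≠ 0) :
    ContinuousAt (fun r : ℝ => (P - r • A)⁻¹) s := by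
  refine (continuousAt_matrix_inv _ ?_).comp (by fun_prop)
  simpa [Ring.inverse_eq_inv'] using continuousAt_inv₀ hs

section FirstZero

variable {α γ : Type*} [ConditionallyCompleteLinearOrder α] [TopologicalSpace α] [OrderTopology α]
  [TopologicalSpace γ] [T1Space γ] {D : Set α} {g : α → γ} {a : α} {y : γ}

theorem exists_isLeast_preimage_of_continuousOn (hD : D.OrdConnected) (hg : ContinuousOn g D)
    (ha : a ∈ D) (hex : ∃ s, a ≤ s ∧ s ∈ D ∧ g s = y) :
    ∃ c, IsLeast {s | a ≤ s ∧ s ∈ D ∧ g s = y} c := by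
  obtain ⟨s₀, has₀, hs₀, hgs₀⟩ := hex
  have hIcc : Icc a s₀ ⊆ D := hD.out ha hs₀
  have hK : IsCompact (Icc a s₀ ∩ g ⁻¹' {y}) :=
    isCompact_Icc.of_isClosed_subset
      ((hg.mono hIcc).preimage_isClosed_of_isClosed isClosed_Icc isClosed_singleton)
      inter_subset_left
  obtain ⟨c, ⟨⟨hac, hcs₀⟩, hgc⟩, hleast⟩ := hK.exists_isLeast ⟨s₀, ⟨has₀, le_rfl⟩, hgs₀⟩
  refine ⟨c, ⟨hac, hIcc ⟨hac, hcs₀⟩, hgc⟩, fun t ⟨hat, _, hgt⟩ => ?_⟩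
  rcases le_total t s₀ with hts₀ | hs₀t
  · exact hleast ⟨⟨hat, hts₀⟩, hgt⟩
  · exact hcs₀.trans hs₀t

theorem exists_isGreatest_preimage_of_continuousOn (hD : D.OrdConnected) (hg : ContinuousOn g D)
    (ha : a ∈ D) (hex : ∃ s, s ≤ a ∧ s ∈ D ∧ g s = y) :
    ∃ c, IsGreatest {s | s ≤ a ∧ s ∈ D ∧ g s = y} c :=
  exists_isLeast_preimage_of_continuousOn (α := αᵒᵈ) hD.dual hg ha hex

end FirstZero

theorem lt_apply_of_mem_Ico_of_isLeast_preimage {α δ : Type*} [ConditionallyCompleteLinearOrder α]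
    [TopologicalSpace α] [OrderTopology α] [DenselyOrdered α] [LinearOrder δ]
    [TopologicalSpace δ] [OrderClosedTopology δ] {D : Set α} {g : α → δ} {a c t : α} {y : δ}
    (hD : D.OrdConnected) (hg : ContinuousOn g D) (hc : IsLeast {s | a ≤ s ∧ s ∈ D ∧ g s = y} c)
    (ha : a ∈ D) (hga : y < g a) (ht : t ∈ Ico a c) : y < g t := by
  by_contra! hgt
  have hIcc : Icc a t ⊆ D := hD.out ha (hD.out ha hc.1.2.1 (Ico_subset_Icc_self ht))
  obtain ⟨x, hx, hgx⟩ := intermediate_value_Icc' ht.1 (hg.mono hIcc) ⟨hgt, hga.le⟩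
  exact (hc.2 ⟨hx.1, hIcc hx, hgx⟩).not_gt (hx.2.trans_lt ht.2)

theorem continuousOn_lsGrad (n : ℕ) (l u : Fin n → ℤ) (β : Fin n → ℤ → ℝ)
    (Q : Matrix (Fin (n + 1)) (Fin (n + 1)) ℝ) (σ y0 : ℝ) (yv : Fin n → ℤ → ℝ) (i : Fin n) (j : ℤ) :
    ContinuousOn (lsGrad n l u β Q σ y0 yv i j)
      {s | (Q - ATy n l u β y0 yv - s • Aconstr n l u β i j).PosDef} := fun _ hs =>
  (continuousAt_const.sub <| continuousAt_const.mul <|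
    (continuous_const.matrix_mul continuous_id).matrix_trace.continuousAt.comp
      (Matrix.continuousAt_inv_sub_smul hs.det_pos.ne')).continuousWithinAt

theorem stmt9_general (n : ℕ) (l u : Fin n → ℤ)
    (β : Fin n → ℤ → ℝ) (Q : Matrix (Fin (n + 1)) (Fin (n + 1)) ℝ)
    (σ : ℝ) (y0 : ℝ) (yv : Fin n → ℤ → ℝ)
    (hfeas : (Q - ATy n l u β y0 yv).PosDef)
    (hsign : ∀ i : Fin n, ∀ j ∈ Finset.Icc (l i) (u i), yv i j ≤ 0)
    (i : Fin n) (j : ℤ) (hj : j ∈ Finset.Icc (l i) (u i)) :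
    ((0 < lsGrad n l u β Q σ y0 yv i j 0 → yv i j < 0 →
      (∃ s : ℝ, 0 ≤ s ∧
          (Q - ATy n l u β y0 yv - s • Aconstr n l u β i j).PosDef ∧
          lsGrad n l u β Q σ y0 yv i j s = 0) →
      ∃ sp : ℝ,
        IsLeast {s : ℝ | 0 ≤ s ∧
            (Q - ATy n l u β y0 yv - s • Aconstr n l u β i j).PosDef ∧
            lsGrad n l u β Q σ y0 yv i j s = 0} sp ∧
        (((Q - ATy n l u β y0 yv - sp • Aconstr n l u β i j).PosDef ∧
            yv i j + sp ≤ 0) ∨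
          (-yv i j < sp ∧
            (Q - ATy n l u β y0 yv + yv i j • Aconstr n l u β i j).PosDef ∧
            0 < lsGrad n l u β Q σ y0 yv i j (-yv i j))))) ∧
    (lsGrad n l u β Q σ y0 yv i j 0 < 0 →
      (∃ s : ℝ, s ≤ 0 ∧
          (Q - ATy n l u β y0 yv - s • Aconstr n l u β i j).PosDef ∧
          lsGrad n l u β Q σ y0 yv i j s = 0) →
      ∃ sm : ℝ,
        IsGreatest {s : ℝ | s ≤ 0 ∧
            (Q - ATy n l u β y0 yv - s • Aconstr n l u β i j).PosDef ∧
            lsGrad n l u β Q σ y0 yv i j s = 0} sm ∧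
        (Q - ATy n l u β y0 yv - sm • Aconstr n l u β i j).PosDef ∧
        yv i j + sm ≤ 0) := by
  have hD := (Matrix.convex_setOf_posDef_sub_smul (Q - ATy n l u β y0 yv)
    (Aconstr n l u β i j)).ordConnected
  have hg := continuousOn_lsGrad n l u β Q σ y0 yv i j
  have h0 : (Q - ATy n l u β y0 yv - (0 : ℝ) • Aconstr n l u β i j).PosDef := by
    rwa [zero_smul, sub_zero]
  have hy := hsign i j hj
  refine ⟨fun hpos _ hex => ?_, fun _ hex => ?_⟩
  · obtain ⟨sp, hsp⟩ := exists_isLeast_preimage_of_continuousOn hD hg h0 hex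
    refine ⟨sp, hsp, ?_⟩
    rcases le_or_gt (yv i j + sp) 0 with hle | hlt
    · exact .inl ⟨hsp.1.2.1, hle⟩
    have hmem : -yv i j ∈ Ico 0 sp := ⟨by linarith, by linarith⟩
    refine .inr ⟨hmem.2, ?_, lt_apply_of_mem_Ico_of_isLeast_preimage hD hg hsp h0 hpos hmem⟩
    have hpd : (Q - ATy n l u β y0 yv - (-yv i j) • Aconstr n l u β i j).PosDef :=
      hD.out h0 hsp.1.2.1 (Ico_subset_Icc_self hmem)
    rwa [neg_smul, sub_neg_eq_add] at hpd
  · obtain ⟨sm, hsm⟩ := exists_isGreatest_preimage_of_continuousOn hD hg h0 hex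
    exact ⟨sm, hsm, hsm.1.2.1, by linarith [hsm.1.1]⟩

theorem stmt9 (n : ℕ) (hn : 1 ≤ n) (l u : Fin n → ℤ) (hlu : ∀ i, l i < u i)
    (β : Fin n → ℤ → ℝ) (Q : Matrix (Fin (n + 1)) (Fin (n + 1)) ℝ)
    (hQ : Q.IsHermitian) (σ : ℝ) (hσ : 0 < σ) (y0 : ℝ) (yv : Fin n → ℤ → ℝ)
    (hfeas : (Q - ATy n l u β y0 yv).PosDef)
    (hsign : ∀ i : Fin n, ∀ j ∈ Finset.Icc (l i) (u i), yv i j ≤ 0)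
    (i : Fin n) (j : ℤ) (hj : j ∈ Finset.Icc (l i) (u i)) :
    ((0 < lsGrad n l u β Q σ y0 yv i j 0 → yv i j < 0 →
      (∃ s : ℝ, 0 ≤ s ∧
          (Q - ATy n l u β y0 yv - s • Aconstr n l u β i j).PosDef ∧
          lsGrad n l u β Q σ y0 yv i j s = 0) →
      ∃ sp : ℝ,
        IsLeast {s : ℝ | 0 ≤ s ∧
            (Q - ATy n l u β y0 yv - s • Aconstr n l u β i j).PosDef ∧
            lsGrad n l u β Q σ y0 yv i j s = 0} sp ∧
        (((Q - ATy n l u β y0 yv - sp • Aconstr n l u β i j).PosDef ∧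
            yv i j + sp ≤ 0) ∨
          (-yv i j < sp ∧
            (Q - ATy n l u β y0 yv + yv i j • Aconstr n l u β i j).PosDef ∧
            0 < lsGrad n l u β Q σ y0 yv i j (-yv i j))))) ∧
    (lsGrad n l u β Q σ y0 yv i j 0 < 0 →
      (∃ s : ℝ, s ≤ 0 ∧
          (Q - ATy n l u β y0 yv - s • Aconstr n l u β i j).PosDef ∧
          lsGrad n l u β Q σ y0 yv i j s = 0) →
      ∃ sm : ℝ,
        IsGreatest {s : ℝ | s ≤ 0 ∧
            (Q - ATy n l u β y0 yv - s • Aconstr n l u β i j).PosDef ∧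
            lsGrad n l u β Q σ y0 yv i j s = 0} sm ∧
        (Q - ATy n l u β y0 yv - sm • Aconstr n l u β i j).PosDef ∧
        yv i j + sm ≤ 0) :=
  stmt9_general n l u β Q σ y0 yv hfeas hsign i j hj
end

section
/- Fix σ > 0 and a point y feasible for the barrier problem (Q − 𝒜ᵀy positive definite, y_{ij} ≤ 0 for all i, j), and fix a coordinate ij. Write g(s) = β_{ij} − σ⟨A_{ij}, (Q − 𝒜ᵀy − s A_{ij})⁻¹⟩ for all s at which Q − 𝒜ᵀy − s A_{ij} is invertible, and φ(s) = f(y + s·e_{ij}; σ). (i) Suppose ∂f/∂y_{ij}(y; σ) > 0 and y_{ij} < 0. If g has at least one positive root, then for the smallest positive root s⁺ either (y + s⁺ e_{ij} is feasible for the barrier problem and φ'(s⁺) = 0) or (y_{ij} + s⁺ > 0 and φ'(−y_{ij}) > 0). If g has no positive root, then φ'(−y_{ij}) > 0. (ii) Suppose ∂f/∂y_{ij}(y; σ) < 0. Then g has at least one negative root, and for the largest negative root s⁻, the point y + s⁻ e_{ij} is feasible for the barrier problem and φ'(s⁻) = 0. -/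
open Matrix Polynomial Set

variable {N : ℕ}

lemma aux_psd_det {P : Matrix (Fin N) (Fin N) ℝ} (hP : P.PosSemidef) (hd : P.det ≠ 0) :
    P.PosDef := by
  refine Matrix.posDef_iff_dotProduct_mulVec.mpr ⟨hP.1, fun x hx => ?_⟩
  rcases lt_or_eq_of_le (hP.dotProduct_mulVec_nonneg x) with h | h
  · simpa using h
  · exfalso
    have h0 : star x ⬝ᵥ P *ᵥ x = 0 := by
      have := h.symm
      simpa using this
    have hPx : P *ᵥ x = 0 := (hP.dotProduct_mulVec_zero_iff x).mp h0
    have hinj : Function.Injective (P.mulVec) :=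
      Matrix.mulVec_injective_iff_isUnit.mpr ((Matrix.isUnit_iff_isUnit_det P).mpr hd.isUnit)
    exact hx (hinj (by simpa using hPx))


lemma aux_star_real (x : Fin N → ℝ) : star x = x := by
  funext k; simp

open scoped MatrixOrder in
lemma aux_psd_decomp {P : Matrix (Fin N) (Fin N) ℝ} (hP : P.PosSemidef) :
    ∃ B : Matrix (Fin N) (Fin N) ℝ, P = Bᴴ * B := by
  obtain ⟨B, hB⟩ := CStarAlgebra.nonneg_iff_eq_star_mul_self.mp hP.nonneg
  exact ⟨B, hB⟩

lemma aux_cs {P : Matrix (Fin N) (Fin N) ℝ} (hP : P.PosDef) :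
    ∃ δ : ℝ, 0 < δ ∧ ∀ v : Fin N → ℝ, δ * (v ⬝ᵥ v) ≤ v ⬝ᵥ P *ᵥ v := by
  obtain ⟨B, hB⟩ := aux_psd_decomp hP.posSemidef
  have hform : ∀ v : Fin N → ℝ, v ⬝ᵥ P *ᵥ v = (B *ᵥ v) ⬝ᵥ (B *ᵥ v) := by
    intro v
    rw [hB, ← Matrix.mulVec_mulVec, Matrix.dotProduct_mulVec, Matrix.vecMul_conjTranspose,
      aux_star_real, aux_star_real]
  have hinj : Function.Injective (B.mulVec) := by
    intro a b hab
    by_contra hne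
    have hsub : a - b ≠ 0 := sub_ne_zero.mpr hne
    have hpos := hP.dotProduct_mulVec_pos hsub
    rw [aux_star_real, hform] at hpos
    rw [Matrix.mulVec_sub, hab, sub_self] at hpos
    simp at hpos
  have hunit : IsUnit B := Matrix.mulVec_injective_iff_isUnit.mp hinj
  have hunitdet : IsUnit B.det := (Matrix.isUnit_iff_isUnit_det B).mp hunit
  set D := B⁻¹ with hD
  have hDB : D * B = 1 := Matrix.nonsing_inv_mul B hunitdet
  set K : ℝ := (∑ k : Fin N, ∑ m : Fin N, (D k m) ^ 2) + 1 with hK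
  have hKpos : 0 < K := by
    have : (0:ℝ) ≤ ∑ k : Fin N, ∑ m : Fin N, (D k m) ^ 2 :=
      Finset.sum_nonneg fun k _ => Finset.sum_nonneg fun m _ => sq_nonneg _
    linarith
  refine ⟨1 / K, by positivity, fun v => ?_⟩
  have hv : v = D *ᵥ (B *ᵥ v) := by
    rw [Matrix.mulVec_mulVec, hDB, Matrix.one_mulVec]
  set w := B *ᵥ v with hw
  have hww : 0 ≤ w ⬝ᵥ w := by
    simp only [dotProduct]
    exact Finset.sum_nonneg fun k _ => mul_self_nonneg _
  have hvv : v ⬝ᵥ v ≤ K * (w ⬝ᵥ w) := by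
    have hvv2 : v ⬝ᵥ v = ∑ k : Fin N, (∑ m : Fin N, D k m * w m) ^ 2 := by
      conv_lhs => rw [hv]
      simp only [dotProduct, Matrix.mulVec, dotProduct, sq]
    rw [hvv2]
    have hbound : ∀ k : Fin N, (∑ m : Fin N, D k m * w m) ^ 2 ≤
        (∑ m : Fin N, (D k m) ^ 2) * (w ⬝ᵥ w) := by
      intro k
      have := Finset.sum_mul_sq_le_sq_mul_sq Finset.univ (fun m => D k m) (fun m => w m)
      simpa [dotProduct, sq] using this
    calc ∑ k : Fin N, (∑ m : Fin N, D k m * w m) ^ 2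
        ≤ ∑ k : Fin N, (∑ m : Fin N, (D k m) ^ 2) * (w ⬝ᵥ w) :=
          Finset.sum_le_sum fun k _ => hbound k
      _ = (∑ k : Fin N, ∑ m : Fin N, (D k m) ^ 2) * (w ⬝ᵥ w) := by
          rw [Finset.sum_mul]
      _ ≤ K * (w ⬝ᵥ w) := by
          apply mul_le_mul_of_nonneg_right _ hww
          simp [hK]
  rw [hform v, ← hw]
  rw [div_mul_eq_mul_div, one_mul, div_le_iff₀ hKpos]
  calc v ⬝ᵥ v ≤ K * (w ⬝ᵥ w) := hvv
    _ = (w ⬝ᵥ w) * K := mul_comm _ _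

lemma aux_form_bound (B : Matrix (Fin N) (Fin N) ℝ) (v : Fin N → ℝ) :
    |v ⬝ᵥ B *ᵥ v| ≤ (∑ k : Fin N, ∑ m : Fin N, |B k m|) * (v ⬝ᵥ v) := by
  have hvb : ∀ k : Fin N, (v k)^2 ≤ v ⬝ᵥ v := by
    intro k
    simp only [dotProduct]
    have : ∀ m ∈ Finset.univ, (0:ℝ) ≤ v m * v m := fun m _ => mul_self_nonneg _
    calc (v k)^2 = v k * v k := sq _
      _ ≤ ∑ m : Fin N, v m * v m := Finset.single_le_sum this (Finset.mem_univ k)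
  have h1 : |v ⬝ᵥ B *ᵥ v| ≤ ∑ k : Fin N, ∑ m : Fin N, |B k m| * |v k| * |v m| := by
    simp only [dotProduct, Matrix.mulVec, dotProduct, Finset.mul_sum]
    calc |∑ k : Fin N, ∑ m : Fin N, v k * (B k m * v m)|
        ≤ ∑ k : Fin N, |∑ m : Fin N, v k * (B k m * v m)| := Finset.abs_sum_le_sum_abs _ _
      _ ≤ ∑ k : Fin N, ∑ m : Fin N, |v k * (B k m * v m)| :=
          Finset.sum_le_sum fun k _ => Finset.abs_sum_le_sum_abs _ _
      _ = ∑ k : Fin N, ∑ m : Fin N, |B k m| * |v k| * |v m| := by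
          congr 1; funext k; congr 1; funext m
          rw [abs_mul, abs_mul]; ring
  have h2 : ∀ k m : Fin N, |v k| * |v m| ≤ v ⬝ᵥ v := by
    intro k m
    have hk2 : (|v k|)^2 ≤ v ⬝ᵥ v := by rw [sq_abs]; exact hvb k
    have hm2 : (|v m|)^2 ≤ v ⬝ᵥ v := by rw [sq_abs]; exact hvb m
    nlinarith [abs_nonneg (v k), abs_nonneg (v m)]
  calc |v ⬝ᵥ B *ᵥ v| ≤ ∑ k : Fin N, ∑ m : Fin N, |B k m| * |v k| * |v m| := h1
    _ ≤ ∑ k : Fin N, ∑ m : Fin N, |B k m| * (v ⬝ᵥ v) := by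
        apply Finset.sum_le_sum; intro k _; apply Finset.sum_le_sum; intro m _
        rw [mul_assoc]
        exact mul_le_mul_of_nonneg_left (h2 k m) (abs_nonneg _)
    _ = (∑ k : Fin N, ∑ m : Fin N, |B k m|) * (v ⬝ᵥ v) := by rw [Finset.sum_mul]; congr 1; funext k; rw [Finset.sum_mul]

lemma aux_open {P B : Matrix (Fin N) (Fin N) ℝ} (hP : P.PosDef) (hB : B.IsHermitian) :
    ∃ ε : ℝ, 0 < ε ∧ ∀ c : ℝ, |c| < ε → (P + c • B).PosDef := by
  obtain ⟨δ, hδ, hco⟩ := aux_cs hP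
  set L : ℝ := (∑ k : Fin N, ∑ m : Fin N, |B k m|) + 1 with hL
  have hLpos : 0 < L := by
    have : (0:ℝ) ≤ ∑ k : Fin N, ∑ m : Fin N, |B k m| :=
      Finset.sum_nonneg fun k _ => Finset.sum_nonneg fun m _ => abs_nonneg _
    linarith
  refine ⟨δ / L, by positivity, fun c hc => ?_⟩
  have hherm : (P + c • B).IsHermitian := by
    have h1 : (c • B)ᴴ = c • B := by
      rw [Matrix.conjTranspose_smul, hB]; simp
    exact hP.1.add h1
  refine Matrix.posDef_iff_dotProduct_mulVec.mpr ⟨hherm, fun x hx => ?_⟩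
  rw [aux_star_real]
  have hvv : 0 < x ⬝ᵥ x := by
    simp only [dotProduct]
    rcases Function.ne_iff.mp hx with ⟨k, hk⟩
    have hk' : x k ≠ 0 := by simpa using hk
    have : (0:ℝ) < x k * x k := mul_self_pos.mpr hk'
    exact Finset.sum_pos' (fun m _ => mul_self_nonneg _) ⟨k, Finset.mem_univ k, this⟩
  have hsplit : x ⬝ᵥ (P + c • B) *ᵥ x = x ⬝ᵥ P *ᵥ x + c * (x ⬝ᵥ B *ᵥ x) := by
    rw [Matrix.add_mulVec, dotProduct_add, Matrix.smul_mulVec,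
      dotProduct_smul, smul_eq_mul]
  rw [hsplit]
  have hb1 : |c * (x ⬝ᵥ B *ᵥ x)| ≤ |c| * (L * (x ⬝ᵥ x)) := by
    rw [abs_mul]
    apply mul_le_mul_of_nonneg_left _ (abs_nonneg c)
    calc |x ⬝ᵥ B *ᵥ x| ≤ (∑ k : Fin N, ∑ m : Fin N, |B k m|) * (x ⬝ᵥ x) := aux_form_bound B x
      _ ≤ L * (x ⬝ᵥ x) := by apply mul_le_mul_of_nonneg_right _ (le_of_lt hvv); simp [hL]
  have hb2 : |c| * (L * (x ⬝ᵥ x)) < δ * (x ⬝ᵥ x) := by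
    have : |c| * L < δ := by
      calc |c| * L < (δ / L) * L := by apply mul_lt_mul_of_pos_right hc hLpos
        _ = δ := by field_simp
    calc |c| * (L * (x ⬝ᵥ x)) = (|c| * L) * (x ⬝ᵥ x) := by ring
      _ < δ * (x ⬝ᵥ x) := by apply mul_lt_mul_of_pos_right this hvv
  have hlow := hco x
  have : -(c * (x ⬝ᵥ B *ᵥ x)) < δ * (x ⬝ᵥ x) := lt_of_le_of_lt (le_trans (neg_le_abs _) hb1) hb2
  linarith

lemma aux_herm_sub {M B : Matrix (Fin N) (Fin N) ℝ} (hM : M.IsHermitian) (hB : B.IsHermitian)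
    (t : ℝ) : (M - t • B).IsHermitian := by
  have h1 : (t • B)ᴴ = t • B := by rw [Matrix.conjTranspose_smul, hB]; simp
  exact hM.sub h1

lemma aux_form_eval {M B : Matrix (Fin N) (Fin N) ℝ} (t : ℝ) (v : Fin N → ℝ) :
    v ⬝ᵥ (M - t • B) *ᵥ v = v ⬝ᵥ M *ᵥ v - t * (v ⬝ᵥ B *ᵥ v) := by
  rw [Matrix.sub_mulVec, dotProduct_sub, Matrix.smul_mulVec,
    dotProduct_smul, smul_eq_mul]

lemma aux_prop {M B : Matrix (Fin N) (Fin N) ℝ} (hM : M.PosDef) (hB : B.IsHermitian)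
    (a : ℝ) (ha : a ≤ 0) (hdet : ∀ t ∈ Set.Icc a 0, (M - t • B).det ≠ 0) :
    ∀ t ∈ Set.Icc a 0, (M - t • B).PosDef := by
  set U : Set ℝ := {s | s ∈ Set.Icc a 0 ∧ ∀ t ∈ Set.Icc s 0, (M - t • B).PosDef} with hU
  have h0 : (0:ℝ) ∈ U := by
    refine ⟨⟨ha, le_refl 0⟩, fun t ht => ?_⟩
    have : t = 0 := le_antisymm ht.2 ht.1
    subst this
    simpa using hM
  have hbdd : BddBelow U := ⟨a, fun s hs => hs.1.1⟩
  set c : ℝ := sInf U with hc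
  have hca : a ≤ c := le_csInf ⟨0, h0⟩ (fun s hs => hs.1.1)
  have hc0 : c ≤ 0 := csInf_le hbdd h0
  have step1 : ∀ t, c < t → t ≤ 0 → (M - t • B).PosDef := by
    intro t hct ht0
    obtain ⟨s, hsU, hst⟩ := exists_lt_of_csInf_lt ⟨0, h0⟩ hct
    exact hsU.2 t ⟨le_of_lt hst, ht0⟩
  have step2 : (M - c • B).PosSemidef := by
    refine Matrix.posSemidef_iff_dotProduct_mulVec.mpr ⟨aux_herm_sub hM.1 hB c, fun v => ?_⟩
    rw [aux_star_real]
    by_contra hneg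
    push_neg at hneg
    have hv : v ≠ 0 := by
      intro h; subst h; simp at hneg
    have hfc : v ⬝ᵥ (M - c • B) *ᵥ v < 0 := hneg
    rw [aux_form_eval] at hfc
    set α := v ⬝ᵥ M *ᵥ v with hα
    set g := v ⬝ᵥ B *ᵥ v with hg
    have hMv : 0 < α := by
      have := hM.dotProduct_mulVec_pos hv; rwa [aux_star_real] at this
    rcases eq_or_lt_of_le hc0 with hceq | hclt
    · rw [hceq] at hfc; simp at hfc; linarith
    · set ε := -(α - c * g) with hε
      have hεpos : 0 < ε := by simp [hε]; linarith
      rcases le_or_gt 0 g with hgpos | hgneg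
      · have hf0 : α - 0 * g ≤ α - c * g + 0 := by nlinarith
        have h1 := step1 0 hclt (le_refl 0)
        have h2 := h1.dotProduct_mulVec_pos hv
        rw [aux_star_real, aux_form_eval] at h2
        nlinarith
      · set t := c + min (ε / (2 * (-g))) (-c) with htdef
        have hmin1 : 0 < ε / (2 * (-g)) := div_pos hεpos (by linarith)
        have htgt : c < t := by
          simp only [htdef]
          have : 0 < min (ε / (2 * (-g))) (-c) := lt_min hmin1 (by linarith)
          linarith
        have htle : t ≤ 0 := by
          simp only [htdef]
          have : min (ε / (2 * (-g))) (-c) ≤ -c := min_le_right _ _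
          linarith
        have h1 := step1 t htgt htle
        have h2 := h1.dotProduct_mulVec_pos hv
        rw [aux_star_real, aux_form_eval] at h2
        have htc : t - c ≤ ε / (2 * (-g)) := by
          simp only [htdef]; linarith [min_le_left (ε / (2 * (-g))) (-c)]
        have hb : (t - c) * (-g) ≤ ε / 2 := by
          rw [le_div_iff₀ (by linarith : (0:ℝ) < 2 * (-g))] at htc
          nlinarith
        have hsplit : t * g = c * g + (t - c) * g := by ring
        have hb2 : -((t - c) * g) ≤ ε / 2 := by nlinarith
        have hfin : α - t * g ≤ (α - c * g) + ε / 2 := by nlinarith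
        rw [← hα, ← hg] at h2
        have hεe : α - c * g = -ε := by rw [hε]; ring
        clear_value α g ε t
        linarith
  intro t ht
  have step3 : (M - c • B).PosDef := aux_psd_det step2 (hdet c ⟨hca, hc0⟩)
  have step4 : ∀ s, c ≤ s → s ≤ 0 → (M - s • B).PosDef := by
    intro s hcs hs0
    rcases eq_or_lt_of_le hcs with h | h
    · rw [← h]; exact step3
    · exact step1 s h hs0
  rcases le_or_gt c t with h | h
  · exact step4 t h ht.2
  ·
    exfalso
    obtain ⟨ε, hεpos, hop⟩ := aux_open step3 hB
    set s := max a (c - ε / 2) with hs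
    have hslt : s < c := by
      apply max_lt
      · exact lt_of_le_of_lt ht.1 h
      · linarith
    have hsU : s ∈ U := by
      refine ⟨⟨le_max_left _ _, ?_⟩, fun r hr => ?_⟩
      · apply max_le ha; linarith
      · rcases le_or_gt r c with hrc | hrc
        · have hid : M - r • B = (M - c • B) + (c - r) • B := by
            rw [sub_smul]; abel
          rw [hid]
          apply hop
          have h1 : c - r ≤ ε / 2 := by
            have : c - ε / 2 ≤ s := le_max_right _ _
            have : c - ε / 2 ≤ r := le_trans this hr.1
            linarith
          have h2 : 0 ≤ c - r := by linarith
          rw [abs_of_nonneg h2]; linarith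
        · exact step1 r hrc hr.2
    have := csInf_le hbdd hsU
    rw [← hc] at this
    linarith

lemma aux_polys (M A : Matrix (Fin N) (Fin N) ℝ) (hdet0 : M.det ≠ 0) :
    ∃ dd pp : ℝ[X], (∀ s, dd.eval s = (M - s • A).det) ∧
      (∀ s, pp.eval s = (A * (M - s • A).adjugate).trace) ∧ dd.derivative = -pp := by
  classical
  set NX : Matrix (Fin N) (Fin N) ℝ[X] := M.map Polynomial.C - (X : ℝ[X]) • A.map Polynomial.C
    with hNX
  have hmap : ∀ s : ℝ, (Polynomial.evalRingHom s).mapMatrix NX = M - s • A := by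
    intro s
    ext k m
    simp [hNX, Matrix.sub_apply, Matrix.smul_apply, smul_eq_mul, Matrix.map_apply]
    ring
  set dd : ℝ[X] := NX.det with hdd
  set pp : ℝ[X] := ((A.map Polynomial.C) * NX.adjugate).trace with hpp
  have hdEval : ∀ s, dd.eval s = (M - s • A).det := by
    intro s
    have := RingHom.map_det (Polynomial.evalRingHom s) NX
    simp only [coe_evalRingHom] at this
    rw [hdd, this, hmap]
  have hpEval : ∀ s, pp.eval s = (A * (M - s • A).adjugate).trace := by
    intro s
    have htr : ∀ B : Matrix (Fin N) (Fin N) ℝ[X],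
        (B.trace).eval s = ((Polynomial.evalRingHom s).mapMatrix B).trace := by
      intro B
      simp only [Matrix.trace, Matrix.diag, RingHom.mapMatrix_apply, Matrix.map_apply]
      exact map_sum (Polynomial.evalRingHom s) _ _
    rw [hpp, htr]
    have h1 : (Polynomial.evalRingHom s).mapMatrix (A.map Polynomial.C) = A := by
      ext k m; simp [Matrix.map_apply]
    have h2 : (Polynomial.evalRingHom s).mapMatrix NX.adjugate = (M - s • A).adjugate := by
      rw [RingHom.map_adjugate, hmap]
    rw [_root_.map_mul (Polynomial.evalRingHom s).mapMatrix, h1, h2]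
  refine ⟨dd, pp, hdEval, hpEval, ?_⟩
  have hd0 : dd ≠ 0 := by
    intro h
    have h2 := hdEval 0
    rw [h, Polynomial.eval_zero] at h2
    apply hdet0
    rw [show M = M - (0:ℝ) • A by simp, ← h2]
  have hfin : {x : ℝ | dd.IsRoot x}.Finite := Polynomial.finite_setOf_isRoot hd0
  have hinf : {x : ℝ | dd.eval x ≠ 0}.Infinite := by
    have : {x : ℝ | dd.eval x ≠ 0} = {x : ℝ | dd.IsRoot x}ᶜ := by
      ext x; simp [Polynomial.IsRoot]
    rw [this]
    exact hfin.infinite_compl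
  have hpointwise : ∀ s₀ : ℝ, dd.eval s₀ ≠ 0 →
      dd.derivative.eval s₀ = (-pp).eval s₀ := by
    intro s₀ hs₀
    set W := M - s₀ • A with hW
    have hWdet : W.det ≠ 0 := by rw [← hdEval]; exact hs₀
    have hWunit : IsUnit W.det := hWdet.isUnit
    set B₀ := W⁻¹ * A with hB₀
    set e : ℝ[X] := Matrix.det (1 + (X : ℝ[X]) • (-B₀).map Polynomial.C) with he
    have heEval : ∀ t : ℝ, e.eval t = (1 - t • B₀).det := by
      intro t
      have := RingHom.map_det (Polynomial.evalRingHom t)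
        (1 + (X : ℝ[X]) • (-B₀).map Polynomial.C)
      simp only [coe_evalRingHom] at this
      rw [he, this]
      congr 1
      ext k m
      by_cases hkm : k = m <;>
        simp [hkm, Matrix.one_apply, Matrix.sub_apply, Matrix.smul_apply, Matrix.add_apply,
          Matrix.neg_apply, Matrix.map_apply] <;> ring
    have hfac : ∀ s : ℝ, dd.eval s = W.det * e.eval (s - s₀) := by
      intro s
      rw [hdEval, heEval]
      have hid : M - s • A = W * (1 - (s - s₀) • B₀) := by
        rw [Matrix.mul_sub, Matrix.mul_one, Matrix.mul_smul, hB₀, ← Matrix.mul_assoc,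
          Matrix.mul_nonsing_inv W hWunit, Matrix.one_mul, hW, sub_smul]
        abel
      rw [hid, Matrix.det_mul]
    have hD1 : HasDerivAt (fun s => dd.eval s) (dd.derivative.eval s₀) s₀ :=
      Polynomial.hasDerivAt dd s₀
    have hD2 : HasDerivAt (fun s => dd.eval s) (W.det * (e.derivative.eval 0 * 1)) s₀ := by
      have hfun : (fun s => dd.eval s) = fun s => W.det * e.eval (s - s₀) := funext hfac
      rw [hfun]
      have hinner : HasDerivAt (fun s : ℝ => s - s₀) 1 s₀ := (hasDerivAt_id s₀).sub_const s₀
      have houter : HasDerivAt (fun t => e.eval t) (e.derivative.eval 0) (s₀ - s₀) := by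
        rw [sub_self]; exact Polynomial.hasDerivAt e 0
      have hcomp := HasDerivAt.comp (h₂ := fun t => e.eval t) (h := fun s : ℝ => s - s₀)
        s₀ houter hinner
      exact hcomp.const_mul W.det
    have hkey : dd.derivative.eval s₀ = W.det * (e.derivative.eval 0 * 1) :=
      hD1.unique hD2
    have htr0 : e.derivative.eval 0 = Matrix.trace (-B₀) := by
      rw [he]
      exact Matrix.derivative_det_one_add_X_smul (-B₀)
    have hadj : (A * W.adjugate).trace = W.det * Matrix.trace B₀ := by
      have hadjW : W.adjugate = W.det • W⁻¹ := by
        rw [Matrix.inv_def]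
        rw [smul_smul, Ring.mul_inverse_cancel _ hWunit, one_smul]
      rw [hadjW, Matrix.mul_smul, Matrix.trace_smul, hB₀, Matrix.trace_mul_comm]
      simp [smul_eq_mul]
    rw [hkey, htr0, Polynomial.eval_neg, hpEval, hadj, Matrix.trace_neg]
    ring
  apply Polynomial.eq_of_infinite_eval_eq
  apply Set.Infinite.mono _ hinf
  intro x hx
  exact hpointwise x hx

lemma aux_blowup_left (f : ℝ[X]) (c b K : ℝ) (hcb : c < b) (h0 : f.eval c = 0)
    (hpos : ∀ t ∈ Set.Ioc c b, 0 < f.eval t) :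
    ∃ ξ ∈ Set.Ioo c b, K ≤ f.derivative.eval ξ / f.eval ξ := by
  set K₁ : ℝ := max K 1 with hK₁
  have hK₁1 : 1 ≤ K₁ := le_max_right _ _
  have hKK₁ : K ≤ K₁ := le_max_left _ _
  have hfb : 0 < f.eval b := hpos b ⟨hcb, le_refl b⟩
  set ε : ℝ := Real.exp (Real.log (f.eval b) - K₁ * (b - c)) with hε
  have hεpos : 0 < ε := Real.exp_pos _
  have hcont : ContinuousAt (fun x => f.eval x) c := (Polynomial.continuous f).continuousAt
  obtain ⟨δ, hδpos, hδ⟩ := Metric.continuousAt_iff.mp hcont ε hεpos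
  set s : ℝ := min (c + δ / 2) ((c + b) / 2) with hs
  have hcs : c < s := lt_min (by linarith) (by linarith)
  have hsb : s < b := lt_of_le_of_lt (min_le_right _ _) (by linarith)
  have hfs : 0 < f.eval s := hpos s ⟨hcs, le_of_lt hsb⟩
  have hfsε : f.eval s < ε := by
    have hd : dist s c < δ := by
      rw [Real.dist_eq, abs_of_pos (by linarith : (0:ℝ) < s - c)]
      have : s ≤ c + δ / 2 := min_le_left _ _
      linarith
    have := hδ hd
    rw [Real.dist_eq, h0, sub_zero] at this
    exact lt_of_le_of_lt (le_abs_self _) this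
  have hlog : Real.log (f.eval s) < Real.log (f.eval b) - K₁ * (b - c) := by
    calc Real.log (f.eval s) < Real.log ε := Real.log_lt_log hfs hfsε
      _ = Real.log (f.eval b) - K₁ * (b - c) := Real.log_exp _
  have hderiv : ∀ x ∈ Set.Ioo s b, HasDerivAt (fun y => Real.log (f.eval y))
      (f.derivative.eval x / f.eval x) x := by
    intro x hx
    exact (Polynomial.hasDerivAt f x).log (hpos x ⟨lt_trans hcs hx.1, le_of_lt hx.2⟩).ne'
  have hcont2 : ContinuousOn (fun y => Real.log (f.eval y)) (Set.Icc s b) := by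
    intro x hx
    exact ((Polynomial.hasDerivAt f x).log
      (hpos x ⟨lt_of_lt_of_le hcs hx.1, hx.2⟩).ne').continuousAt.continuousWithinAt
  obtain ⟨ξ, hξ, hslope⟩ := exists_hasDerivAt_eq_slope (fun y => Real.log (f.eval y))
    (fun x => f.derivative.eval x / f.eval x) hsb hcont2 hderiv
  refine ⟨ξ, ⟨lt_trans hcs hξ.1, hξ.2⟩, ?_⟩
  rw [hslope]
  have hbs : 0 < b - s := by linarith
  have h1 : K₁ * (b - s) ≤ K₁ * (b - c) := by nlinarith
  have h2 : K₁ * (b - c) < Real.log (f.eval b) - Real.log (f.eval s) := by linarith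
  calc K ≤ K₁ := hKK₁
    _ ≤ (Real.log (f.eval b) - Real.log (f.eval s)) / (b - s) := by
        rw [le_div_iff₀ hbs]; linarith
    _ = ((fun y => Real.log (f.eval y)) b - (fun y => Real.log (f.eval y)) s) / (b - s) := rfl

lemma aux_blowup_right (f : ℝ[X]) (a b K : ℝ) (hab : a < b) (h0 : f.eval b = 0)
    (hpos : ∀ t ∈ Set.Ico a b, 0 < f.eval t) :
    ∃ ξ ∈ Set.Ioo a b, f.derivative.eval ξ / f.eval ξ ≤ K := by
  set K₁ : ℝ := min K (-1) with hK₁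
  have hK₁1 : K₁ ≤ -1 := min_le_right _ _
  have hKK₁ : K₁ ≤ K := min_le_left _ _
  have hfa : 0 < f.eval a := hpos a ⟨le_refl a, hab⟩
  set ε : ℝ := Real.exp (Real.log (f.eval a) + K₁ * (b - a)) with hε
  have hεpos : 0 < ε := Real.exp_pos _
  have hcont : ContinuousAt (fun x => f.eval x) b := (Polynomial.continuous f).continuousAt
  obtain ⟨δ, hδpos, hδ⟩ := Metric.continuousAt_iff.mp hcont ε hεpos
  set s : ℝ := max (b - δ / 2) ((a + b) / 2) with hs
  have hsb : s < b := max_lt (by linarith) (by linarith)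
  have has : a < s := lt_of_lt_of_le (by linarith) (le_max_right _ _)
  have hfs : 0 < f.eval s := hpos s ⟨le_of_lt has, hsb⟩
  have hfsε : f.eval s < ε := by
    have hd : dist s b < δ := by
      rw [Real.dist_eq, abs_of_neg (by linarith : s - b < 0)]
      have : b - δ / 2 ≤ s := le_max_left _ _
      linarith
    have := hδ hd
    rw [Real.dist_eq, h0, sub_zero] at this
    exact lt_of_le_of_lt (le_abs_self _) this
  have hlog : Real.log (f.eval s) < Real.log (f.eval a) + K₁ * (b - a) := by
    calc Real.log (f.eval s) < Real.log ε := Real.log_lt_log hfs hfsε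
      _ = _ := Real.log_exp _
  have hderiv : ∀ x ∈ Set.Ioo a s, HasDerivAt (fun y => Real.log (f.eval y))
      (f.derivative.eval x / f.eval x) x := by
    intro x hx
    exact (Polynomial.hasDerivAt f x).log (hpos x ⟨le_of_lt hx.1, lt_trans hx.2 hsb⟩).ne'
  have hcont2 : ContinuousOn (fun y => Real.log (f.eval y)) (Set.Icc a s) := by
    intro x hx
    exact ((Polynomial.hasDerivAt f x).log
      (hpos x ⟨hx.1, lt_of_le_of_lt hx.2 hsb⟩).ne').continuousAt.continuousWithinAt
  obtain ⟨ξ, hξ, hslope⟩ := exists_hasDerivAt_eq_slope (fun y => Real.log (f.eval y))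
    (fun x => f.derivative.eval x / f.eval x) has hcont2 hderiv
  refine ⟨ξ, ⟨hξ.1, lt_trans hξ.2 hsb⟩, ?_⟩
  rw [hslope]
  have hsa : 0 < s - a := by linarith
  have h1 : K₁ * (b - a) ≤ K₁ * (s - a) := by nlinarith
  have h2 : Real.log (f.eval s) - Real.log (f.eval a) < K₁ * (s - a) := by linarith
  calc ((fun y => Real.log (f.eval y)) s - (fun y => Real.log (f.eval y)) a) / (s - a)
      = (Real.log (f.eval s) - Real.log (f.eval a)) / (s - a) := rfl
    _ ≤ K₁ := by rw [div_le_iff₀ hsa]; linarith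
    _ ≤ K := hKK₁

lemma aux_isLeast {S : Set ℝ} (hfin : S.Finite) (hne : S.Nonempty) : ∃ a, IsLeast S a := by
  have hne' : hfin.toFinset.Nonempty := by
    rwa [Set.Finite.toFinset_nonempty]
  refine ⟨hfin.toFinset.min' hne', ?_, ?_⟩
  · rw [← Set.Finite.mem_toFinset hfin]
    exact hfin.toFinset.min'_mem hne'
  · intro x hx
    exact hfin.toFinset.min'_le x ((Set.Finite.mem_toFinset hfin).mpr hx)

lemma aux_isGreatest {S : Set ℝ} (hfin : S.Finite) (hne : S.Nonempty) : ∃ a, IsGreatest S a := by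
  have hne' : hfin.toFinset.Nonempty := by
    rwa [Set.Finite.toFinset_nonempty]
  refine ⟨hfin.toFinset.max' hne', ?_, ?_⟩
  · rw [← Set.Finite.mem_toFinset hfin]
    exact hfin.toFinset.max'_mem hne'
  · intro x hx
    exact hfin.toFinset.le_max' x ((Set.Finite.mem_toFinset hfin).mpr hx)

lemma aux_trace_sq_nonneg (D : Matrix (Fin N) (Fin N) ℝ) : 0 ≤ (Dᴴ * D).trace := by
  simp only [Matrix.trace, Matrix.diag, Matrix.mul_apply, Matrix.conjTranspose_apply,
    star_trivial]
  exact Finset.sum_nonneg fun i _ => Finset.sum_nonneg fun j _ => mul_self_nonneg _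

lemma aux_trace_psd_nonneg {P Y : Matrix (Fin N) (Fin N) ℝ} (hP : P.PosSemidef)
    (hY : Y.PosSemidef) : 0 ≤ (P * Y).trace := by
  obtain ⟨B, hB⟩ := aux_psd_decomp hP
  obtain ⟨C, hC⟩ := aux_psd_decomp hY
  have h1 : (P * Y).trace = ((B * Cᴴ)ᴴ * (B * Cᴴ)).trace := by
    rw [hB, hC]
    calc (Bᴴ * B * (Cᴴ * C)).trace = (Bᴴ * (B * Cᴴ * C)).trace := by simp [Matrix.mul_assoc]
      _ = ((B * Cᴴ * C) * Bᴴ).trace := Matrix.trace_mul_comm _ _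
      _ = ((B * Cᴴ) * (C * Bᴴ)).trace := by simp [Matrix.mul_assoc]
      _ = ((C * Bᴴ) * (B * Cᴴ)).trace := Matrix.trace_mul_comm _ _
      _ = ((B * Cᴴ)ᴴ * (B * Cᴴ)).trace := by
          rw [Matrix.conjTranspose_mul, Matrix.conjTranspose_conjTranspose]
  rw [h1]
  exact aux_trace_sq_nonneg _

lemma aux_quadform (B : Matrix (Fin N) (Fin N) ℝ) (k₁ k₂ : Fin N) (a b : ℝ) :
    (Pi.single k₁ a + Pi.single k₂ b) ⬝ᵥ B *ᵥ (Pi.single k₁ a + Pi.single k₂ b) =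
    a * (B k₁ k₁ * a + B k₁ k₂ * b) + b * (B k₂ k₁ * a + B k₂ k₂ * b) := by
  rw [Matrix.mulVec_add, dotProduct_add, add_dotProduct, add_dotProduct]
  simp only [Matrix.mulVec_single, single_dotProduct, Pi.smul_apply, Matrix.col_apply,
    op_smul_eq_mul]
  ring

lemma aux_Aconstr_herm (n : ℕ) (l u : Fin n → ℤ) (β : Fin n → ℤ → ℝ) (i : Fin n) (j : ℤ) :
    (Aconstr n l u β i j).IsHermitian := by
  unfold Matrix.IsHermitian
  ext k m
  rw [Matrix.conjTranspose_apply, star_trivial]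
  by_cases hk0 : k = 0 <;> by_cases hm0 : m = 0 <;> by_cases hki : k = i.succ <;>
    by_cases hmi : m = i.succ <;>
    simp [Aconstr, hk0, hm0, hki, hmi, Fin.succ_ne_zero]

lemma aux_Aconstr_psd_bound (n : ℕ) (l u : Fin n → ℤ) (β : Fin n → ℤ → ℝ) (i : Fin n) (j : ℤ)
    (hlu : l i < u i) (hpsd : (Aconstr n l u β i j).PosSemidef) : (1:ℝ)/4 ≤ β i j := by
  set A := Aconstr n l u β i j with hA
  have hform : ∀ a b : ℝ, 0 ≤ a * (A 0 0 * a + A 0 i.succ * b) +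
      b * (A i.succ 0 * a + A i.succ i.succ * b) := by
    intro a b
    have := hpsd.dotProduct_mulVec_nonneg (Pi.single (0 : Fin (n+1)) a + Pi.single i.succ b)
    rw [aux_star_real, aux_quadform] at this
    exact this
  have hd : 0 ≤ A i.succ i.succ := by
    have := hform 0 1
    simpa using this
  have hju : j = u i := by
    by_contra hne
    have hval : A i.succ i.succ = -1 := by
      simp [hA, Aconstr, hne, Fin.succ_ne_zero]
    rw [hval] at hd; linarith
  have hA00 : A 0 0 = β i j + (l i : ℝ) * (u i : ℝ) := by
    simp [hA, Aconstr, hju]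
  have hA01 : A 0 i.succ = -((l i : ℝ) + (u i : ℝ)) / 2 := by
    simp [hA, Aconstr, hju, Fin.succ_ne_zero]
  have hA10 : A i.succ 0 = -((l i : ℝ) + (u i : ℝ)) / 2 := by
    simp [hA, Aconstr, hju, Fin.succ_ne_zero]
  have hAdd : A i.succ i.succ = 1 := by
    simp [hA, Aconstr, hju, Fin.succ_ne_zero]
  have hquad : ∀ t : ℝ, 0 ≤ (β i j + (l i : ℝ) * (u i : ℝ)) * (t * t) +
      (2 * (-((l i : ℝ) + (u i : ℝ)) / 2)) * t + 1 := by
    intro t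
    have := hform t 1
    rw [hA00, hA01, hA10, hAdd] at this
    nlinarith [this]
  have hdisc := discrim_le_zero hquad
  rw [discrim] at hdisc
  have hcast : (l i : ℝ) + 1 ≤ (u i : ℝ) := by
    exact_mod_cast Int.add_one_le_iff.mpr hlu
  nlinarith [hdisc, hcast, mul_nonneg (by linarith : (0:ℝ) ≤ (u i : ℝ) - (l i : ℝ) - 1)
    (by linarith : (0:ℝ) ≤ (u i : ℝ) - (l i : ℝ) + 1)]

theorem stmt10 (n : ℕ) (hn : 1 ≤ n) (l u : Fin n → ℤ) (hlu : ∀ i, l i < u i)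
    (β : Fin n → ℤ → ℝ) (Q : Matrix (Fin (n + 1)) (Fin (n + 1)) ℝ)
    (hQ : Q.IsHermitian) (σ : ℝ) (hσ : 0 < σ) (y0 : ℝ) (yv : Fin n → ℤ → ℝ)
    (hfeas : (Q - ATy n l u β y0 yv).PosDef)
    (hsign : ∀ i : Fin n, ∀ j ∈ Finset.Icc (l i) (u i), yv i j ≤ 0)
    (i : Fin n) (j : ℤ) (hj : j ∈ Finset.Icc (l i) (u i)) :
    ((0 < lsGrad n l u β Q σ y0 yv i j 0 → yv i j < 0 →
      ((∃ s : ℝ, 0 < s ∧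
          IsUnit (Q - ATy n l u β y0 yv - s • Aconstr n l u β i j).det ∧
          lsGrad n l u β Q σ y0 yv i j s = 0) →
        ∃ sp : ℝ,
          IsLeast {s : ℝ | 0 < s ∧
              IsUnit (Q - ATy n l u β y0 yv - s • Aconstr n l u β i j).det ∧
              lsGrad n l u β Q σ y0 yv i j s = 0} sp ∧
          (((Q - ATy n l u β y0 yv - sp • Aconstr n l u β i j).PosDef ∧
              yv i j + sp ≤ 0 ∧ lsGrad n l u β Q σ y0 yv i j sp = 0) ∨
            (0 < yv i j + sp ∧ 0 < lsGrad n l u β Q σ y0 yv i j (-yv i j)))) ∧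
      ((¬ ∃ s : ℝ, 0 < s ∧
          IsUnit (Q - ATy n l u β y0 yv - s • Aconstr n l u β i j).det ∧
          lsGrad n l u β Q σ y0 yv i j s = 0) →
        0 < lsGrad n l u β Q σ y0 yv i j (-yv i j)))) ∧
    (lsGrad n l u β Q σ y0 yv i j 0 < 0 →
      ∃ sm : ℝ,
        IsGreatest {s : ℝ | s < 0 ∧
            IsUnit (Q - ATy n l u β y0 yv - s • Aconstr n l u β i j).det ∧
            lsGrad n l u β Q σ y0 yv i j s = 0} sm ∧
        (Q - ATy n l u β y0 yv - sm • Aconstr n l u β i j).PosDef ∧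
        yv i j + sm ≤ 0 ∧ lsGrad n l u β Q σ y0 yv i j sm = 0) := by
  classical
  set M : Matrix (Fin (n + 1)) (Fin (n + 1)) ℝ := Q - ATy n l u β y0 yv with hM
  set A : Matrix (Fin (n + 1)) (Fin (n + 1)) ℝ := Aconstr n l u β i j with hA'
  set g : ℝ → ℝ := lsGrad n l u β Q σ y0 yv i j with hg
  have hAh : A.IsHermitian := aux_Aconstr_herm n l u β i j
  have hdM : M.det ≠ 0 := hfeas.det_pos.ne'
  obtain ⟨dd, pp, hdEval, hpEval, hdpD⟩ := aux_polys M A hdM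
  have hd0 : dd.eval 0 = M.det := by rw [hdEval]; congr 1; simp
  have hd0ne : dd.eval 0 ≠ 0 := by rw [hd0]; exact hdM
  have hddne : dd ≠ 0 := fun h => hd0ne (by rw [h]; simp)
  have hGdef : ∀ s : ℝ, g s = β i j - σ * (A * (M - s • A)⁻¹).trace := fun s => rfl
  have hdetpos : ∀ {s : ℝ}, (M - s • A).PosDef → 0 < dd.eval s := by
    intro s h
    rw [hdEval]; exact h.det_pos
  have hGrad : ∀ s : ℝ, dd.eval s ≠ 0 → g s = β i j - σ * (pp.eval s / dd.eval s) := by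
    intro s hs
    rw [hGdef]
    congr 1
    rw [hdEval] at hs
    have hinv : (M - s • A)⁻¹ = (dd.eval s)⁻¹ • (M - s • A).adjugate := by
      rw [Matrix.inv_def, Ring.inverse_eq_inv, hdEval]
    rw [hinv, Matrix.mul_smul, Matrix.trace_smul, smul_eq_mul, hpEval, div_eq_inv_mul]
  set qq : Polynomial ℝ := Polynomial.C (β i j) * dd - Polynomial.C σ * pp with hqq
  have hrootiff : ∀ s : ℝ, dd.eval s ≠ 0 → (g s = 0 ↔ qq.eval s = 0) := by
    intro s hs
    rw [hGrad s hs, hqq]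
    simp only [Polynomial.eval_sub, Polynomial.eval_mul, Polynomial.eval_C]
    constructor
    · intro h
      have : β i j = σ * (pp.eval s / dd.eval s) := by linarith
      rw [this]
      field_simp
      ring
    · intro h
      have : β i j * dd.eval s = σ * pp.eval s := by linarith
      field_simp
      linarith [this]
  have hGcont : ∀ a b : ℝ, (∀ t ∈ Set.Icc a b, dd.eval t ≠ 0) →
      ContinuousOn (fun s => β i j - σ * (pp.eval s / dd.eval s)) (Set.Icc a b) := by
    intro a b hne
    apply ContinuousOn.sub continuousOn_const
    apply ContinuousOn.mul continuousOn_const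
    exact ContinuousOn.div (Polynomial.continuous pp).continuousOn
      (Polynomial.continuous dd).continuousOn hne
  -- IVT: positive at a, negative at b, PD on [a,b] gives root in (a,b)
  have hIVT : ∀ a b : ℝ, a < b → (∀ t ∈ Set.Icc a b, (M - t • A).PosDef) →
      0 < g a → g b < 0 → ∃ r ∈ Set.Ioo a b, g r = 0 := by
    intro a b hab hPD hga hgb
    have hne : ∀ t ∈ Set.Icc a b, dd.eval t ≠ 0 := fun t ht => (hdetpos (hPD t ht)).ne'
    have hcont := hGcont a b hne
    have hga' : 0 < β i j - σ * (pp.eval a / dd.eval a) := by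
      rw [← hGrad a (hne a ⟨le_refl a, le_of_lt hab⟩)]; exact hga
    have hgb' : β i j - σ * (pp.eval b / dd.eval b) < 0 := by
      rw [← hGrad b (hne b ⟨le_of_lt hab, le_refl b⟩)]; exact hgb
    have h0mem : (0:ℝ) ∈ Set.Ioo (β i j - σ * (pp.eval b / dd.eval b))
        (β i j - σ * (pp.eval a / dd.eval a)) := ⟨hgb', hga'⟩
    obtain ⟨r, hr, hGr⟩ := intermediate_value_Ioo' (le_of_lt hab) hcont h0mem
    refine ⟨r, hr, ?_⟩
    rw [hGrad r (hne r ⟨le_of_lt hr.1, le_of_lt hr.2⟩)]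
    exact hGr
  -- negative-side dichotomy
  have hNEG : (∀ s : ℝ, s ≤ 0 → (M - s • A).PosDef) ∨
      (∃ c : ℝ, c < 0 ∧ dd.eval c = 0 ∧ ∀ s ∈ Set.Ioc c 0, (M - s • A).PosDef) := by
    set R : Set ℝ := {s | s < 0 ∧ dd.eval s = 0} with hR
    by_cases hRne : R.Nonempty
    · right
      have hRfin : R.Finite :=
        (Polynomial.finite_setOf_isRoot hddne).subset (fun s hs => hs.2)
      obtain ⟨c, hcmem, hcub⟩ := aux_isGreatest hRfin hRne
      refine ⟨c, hcmem.1, hcmem.2, fun s hs => ?_⟩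
      have hdet : ∀ t ∈ Set.Icc s 0, (M - t • A).det ≠ 0 := by
        intro t ht
        rw [← hdEval]
        intro h
        rcases lt_or_eq_of_le ht.2 with h2 | h2
        · have : t ∈ R := ⟨h2, h⟩
          have := hcub this
          linarith [hs.1, ht.1]
        · rw [h2] at h; exact hd0ne h
      exact aux_prop hfeas hAh s hs.2 hdet s ⟨le_refl s, hs.2⟩
    · left
      intro s hs
      have hdet : ∀ t ∈ Set.Icc s 0, (M - t • A).det ≠ 0 := by
        intro t ht
        rw [← hdEval]
        intro h
        rcases lt_or_eq_of_le ht.2 with h2 | h2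
        · exact hRne ⟨t, h2, h⟩
        · rw [h2] at h; exact hd0ne h
      exact aux_prop hfeas hAh s hs hdet s ⟨le_refl s, hs⟩
  -- positive-side dichotomy
  have hconv : ∀ s : ℝ, M - (-s) • (-A) = M - s • A := by
    intro s; rw [neg_smul, smul_neg, neg_neg]
  have hPOS : (∀ s : ℝ, 0 ≤ s → (M - s • A).PosDef) ∨
      (∃ c : ℝ, 0 < c ∧ dd.eval c = 0 ∧ ∀ s ∈ Set.Ico 0 c, (M - s • A).PosDef) := by
    set R : Set ℝ := {s | 0 < s ∧ dd.eval s = 0} with hR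
    have hprop : ∀ b : ℝ, 0 ≤ b → (∀ t ∈ Set.Icc 0 b, (M - t • A).det ≠ 0) →
        ∀ s ∈ Set.Icc 0 b, (M - s • A).PosDef := by
      intro b hb hdet s hs
      have hdet' : ∀ t ∈ Set.Icc (-b) 0, (M - t • (-A)).det ≠ 0 := by
        intro t ht
        have : M - t • (-A) = M - (-t) • A := by rw [smul_neg, neg_smul]
        rw [this]
        exact hdet (-t) ⟨neg_nonneg.mpr ht.2, by linarith [ht.1]⟩
      have := aux_prop hfeas hAh.neg (-b) (neg_nonpos.mpr hb) hdet' (-s)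
        ⟨by linarith [hs.2], by linarith [hs.1]⟩
      rwa [hconv] at this
    by_cases hRne : R.Nonempty
    · right
      have hRfin : R.Finite :=
        (Polynomial.finite_setOf_isRoot hddne).subset (fun s hs => hs.2)
      obtain ⟨c, hcmem, hclb⟩ := aux_isLeast hRfin hRne
      refine ⟨c, hcmem.1, hcmem.2, fun s hs => ?_⟩
      apply hprop s hs.1 _ s ⟨hs.1, le_refl s⟩
      intro t ht
      rw [← hdEval]
      intro h
      rcases lt_or_eq_of_le ht.1 with h1 | h1
      · have : t ∈ R := ⟨h1, h⟩
        have := hclb this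
        linarith [hs.2, ht.2]
      · rw [← h1] at h; exact hd0ne h
    · left
      intro s hs
      apply hprop s hs _ s ⟨hs, le_refl s⟩
      intro t ht
      rw [← hdEval]
      intro h
      rcases lt_or_eq_of_le ht.1 with h1 | h1
      · exact hRne ⟨t, h1, h⟩
      · rw [← h1] at h; exact hd0ne h
  have hqq0 : g 0 ≠ 0 → qq ≠ 0 := by
    intro h0 hq
    exact h0 ((hrootiff 0 hd0ne).mpr (by rw [hq]; simp))
  have hZfin : g 0 ≠ 0 → {s : ℝ | qq.IsRoot s}.Finite :=
    fun h0 => Polynomial.finite_setOf_isRoot (hqq0 h0)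
  have hmemroot : ∀ s : ℝ, IsUnit (M - s • A).det → g s = 0 → qq.IsRoot s := by
    intro s hu hgs
    have hds : dd.eval s ≠ 0 := by rw [hdEval]; exact hu.ne_zero
    exact (hrootiff s hds).mp hgs
  have hppneg : ∀ s : ℝ, pp.eval s = -(dd.derivative.eval s) := by
    intro s
    have : dd.derivative.eval s = (-pp).eval s := by rw [hdpD]
    rw [Polynomial.eval_neg] at this
    linarith
  have hgform : ∀ s : ℝ, dd.eval s ≠ 0 →
      g s = β i j + σ * (dd.derivative.eval s / dd.eval s) := by
    intro s hs
    rw [hGrad s hs, hppneg, neg_div, mul_neg]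
    ring
  constructor
  · -- Part (i)
    intro hg0 hyv
    have hg0' : g 0 ≠ 0 := ne_of_gt hg0
    -- bounded positive case: find a root strictly below c
    have hfindroot : ∀ c : ℝ, 0 < c → dd.eval c = 0 →
        (∀ s ∈ Set.Ico 0 c, (M - s • A).PosDef) →
        ∃ r, 0 < r ∧ r < c ∧ (M - r • A).PosDef ∧ g r = 0 := by
      intro c hc hdc hPD
      obtain ⟨ξ, hξ, hslope⟩ := aux_blowup_right dd 0 c ((-1 - β i j) / σ) hc hdc
        (fun t ht => hdetpos (hPD t ht))
      have hPDξ : (M - ξ • A).PosDef := hPD ξ ⟨le_of_lt hξ.1, hξ.2⟩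
      have hgξ : g ξ < 0 := by
        rw [hgform ξ (hdetpos hPDξ).ne']
        have h2 : σ * (dd.derivative.eval ξ / dd.eval ξ) ≤ σ * ((-1 - β i j) / σ) :=
          mul_le_mul_of_nonneg_left hslope hσ.le
        have h3 : σ * ((-1 - β i j) / σ) = -1 - β i j := by field_simp
        linarith
      obtain ⟨r, hr, hgr⟩ := hIVT 0 ξ hξ.1
        (fun t ht => hPD t ⟨ht.1, lt_of_le_of_lt ht.2 hξ.2⟩) hg0 hgξ
      exact ⟨r, hr.1, lt_trans hr.2 hξ.2,
        hPD r ⟨le_of_lt hr.1, lt_trans hr.2 hξ.2⟩, hgr⟩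
    constructor
    · -- case (a)
      intro hex
      have hZne : {s : ℝ | 0 < s ∧ IsUnit (M - s • A).det ∧ g s = 0}.Nonempty := hex
      have hZfin' : {s : ℝ | 0 < s ∧ IsUnit (M - s • A).det ∧ g s = 0}.Finite :=
        (hZfin hg0').subset (fun s hs => hmemroot s hs.2.1 hs.2.2)
      obtain ⟨sp, hsp⟩ := aux_isLeast hZfin' hZne
      have hseg : ∀ t ∈ Set.Icc 0 sp, (M - t • A).PosDef := by
        rcases hPOS with hall | ⟨c, hc, hdc, hPD⟩
        · exact fun t ht => hall t ht.1
        · have hsplt : sp < c := by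
            by_contra hge
            push_neg at hge
            obtain ⟨r, hr1, hr2, hrPD, hgr⟩ := hfindroot c hc hdc hPD
            have : sp ≤ r := hsp.2 ⟨hr1, isUnit_iff_ne_zero.mpr hrPD.det_pos.ne', hgr⟩
            linarith
          exact fun t ht => hPD t ⟨ht.1, lt_of_le_of_lt ht.2 hsplt⟩
      obtain ⟨hsp0, hspu, hspg⟩ := hsp.1
      refine ⟨sp, hsp, ?_⟩
      rcases le_or_gt (yv i j + sp) 0 with hc1 | hc1
      · exact Or.inl ⟨hseg sp ⟨le_of_lt hsp0, le_refl sp⟩, hc1, hspg⟩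
      · refine Or.inr ⟨hc1, ?_⟩
        have hm0 : 0 < -yv i j := by linarith
        have hmsp : -yv i j < sp := by linarith
        have hmPD : (M - (-yv i j) • A).PosDef :=
          hseg _ ⟨le_of_lt hm0, le_of_lt hmsp⟩
        rcases lt_trichotomy (g (-yv i j)) 0 with hlt | heq | hgt
        · exfalso
          obtain ⟨r, hr, hgr⟩ := hIVT 0 (-yv i j) hm0
            (fun t ht => hseg t ⟨ht.1, le_trans ht.2 (le_of_lt hmsp)⟩) hg0 hlt
          have hrPD : (M - r • A).PosDef :=
            hseg r ⟨le_of_lt hr.1, le_trans (le_of_lt hr.2) (le_of_lt hmsp)⟩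
          have : sp ≤ r := hsp.2 ⟨hr.1, isUnit_iff_ne_zero.mpr hrPD.det_pos.ne', hgr⟩
          linarith [hr.2]
        · exfalso
          have : sp ≤ -yv i j :=
            hsp.2 ⟨hm0, isUnit_iff_ne_zero.mpr hmPD.det_pos.ne', heq⟩
          linarith
        · exact hgt
    · -- case (b)
      intro hnex
      have hall : ∀ s : ℝ, 0 ≤ s → (M - s • A).PosDef := by
        rcases hPOS with hall | ⟨c, hc, hdc, hPD⟩
        · exact fun s hs => hall s hs
        · exfalso
          obtain ⟨r, hr1, _, hrPD, hgr⟩ := hfindroot c hc hdc hPD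
          exact hnex ⟨r, hr1, isUnit_iff_ne_zero.mpr hrPD.det_pos.ne', hgr⟩
      have hyv0 : 0 ≤ -yv i j := by linarith [hsign i j hj]
      rcases eq_or_lt_of_le hyv0 with h0 | h0
      · rw [← h0]; exact hg0
      · rcases lt_trichotomy (g (-yv i j)) 0 with hlt | heq | hgt
        · exfalso
          obtain ⟨r, hr, hgr⟩ := hIVT 0 (-yv i j) h0 (fun t ht => hall t ht.1) hg0 hlt
          exact hnex ⟨r, hr.1,
            isUnit_iff_ne_zero.mpr (hall r (le_of_lt hr.1)).det_pos.ne', hgr⟩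
        · exfalso
          exact hnex ⟨-yv i j, h0,
            isUnit_iff_ne_zero.mpr (hall _ (le_of_lt h0)).det_pos.ne', heq⟩
        · exact hgt
  · -- Part (ii)
    intro hneg
    have hg0' : g 0 ≠ 0 := ne_of_lt hneg
    have hexZm : ∃ r, r < 0 ∧ (M - r • A).PosDef ∧ g r = 0 ∧
        (∀ t, r ≤ t → t < 0 → (M - t • A).PosDef) := by
      rcases hNEG with hall | ⟨c, hc, hdc, hPD⟩
      · -- A is PSD, use the trace bound
        have hAPSD : A.PosSemidef := by
          refine Matrix.posSemidef_iff_dotProduct_mulVec.mpr ⟨hAh, fun v => ?_⟩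
          rw [aux_star_real]
          by_contra hvneg
          push_neg at hvneg
          have hv : v ≠ 0 := by
            intro h; rw [h] at hvneg; simp at hvneg
          set α := v ⬝ᵥ M *ᵥ v with hαdef
          set gg := v ⬝ᵥ A *ᵥ v with hggdef
          have hggneg : gg < 0 := hvneg
          have hggne : gg ≠ 0 := ne_of_lt hggneg
          have hα : 0 < α := by
            have := hfeas.dotProduct_mulVec_pos hv; rwa [aux_star_real] at this
          set t := (α + 1) / (-gg) with htdef
          have ht : 0 < t := div_pos (by linarith) (by linarith)
          have hPDt := (hall (-t) (by linarith)).dotProduct_mulVec_pos hv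
          rw [aux_star_real, aux_form_eval] at hPDt
          rw [← hαdef, ← hggdef] at hPDt
          have htg : t * gg = -(α + 1) := by
            rw [htdef, div_mul_eq_mul_div, div_eq_iff (by linarith : (-gg) ≠ 0)]
            ring
          have h2 : -t * gg = α + 1 := by
            rw [neg_mul]; linarith
          clear_value α gg t
          linarith
        have hβb : (1:ℝ)/4 ≤ β i j :=
          aux_Aconstr_psd_bound n l u β i j (hlu i) hAPSD
        have hβpos : 0 < β i j := by linarith
        set t₀ : ℝ := σ * ((n:ℝ) + 1) / (β i j) + 1 with ht₀def
        have ht₀ : 0 < t₀ := by positivity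
        set W : Matrix (Fin (n + 1)) (Fin (n + 1)) ℝ := M - (-t₀) • A with hWdef
        have hWPD : W.PosDef := hall (-t₀) (by linarith)
        have hXPD : W⁻¹.PosDef := hWPD.inv
        have htrMX : 0 ≤ (M * W⁻¹).trace :=
          aux_trace_psd_nonneg hfeas.posSemidef hXPD.posSemidef
        have hWX : (W * W⁻¹).trace = ((n:ℝ) + 1) := by
          rw [Matrix.mul_nonsing_inv _ (isUnit_iff_ne_zero.mpr hWPD.det_pos.ne'),
            Matrix.trace_one]
          simp
        have hWM : W - M = t₀ • A := by
          rw [hWdef, neg_smul]; abel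
        have htA : t₀ * (A * W⁻¹).trace = ((n:ℝ) + 1) - (M * W⁻¹).trace := by
          have hsm : (t₀ • A) * W⁻¹ = t₀ • (A * W⁻¹) := Matrix.smul_mul t₀ A W⁻¹
          calc t₀ * (A * W⁻¹).trace = (t₀ • (A * W⁻¹)).trace := by
                rw [Matrix.trace_smul, smul_eq_mul]
            _ = ((W - M) * W⁻¹).trace := by rw [← hsm, hWM]
            _ = (W * W⁻¹).trace - (M * W⁻¹).trace := by
                rw [Matrix.sub_mul, Matrix.trace_sub]
            _ = ((n:ℝ) + 1) - (M * W⁻¹).trace := by rw [hWX]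
        have htr : (A * W⁻¹).trace ≤ ((n:ℝ) + 1) / t₀ := by
          rw [le_div_iff₀ ht₀]
          nlinarith [htrMX, htA]
        have hgt₀ : 0 < g (-t₀) := by
          rw [hGdef]
          have h1 : σ * (A * (M - (-t₀) • A)⁻¹).trace ≤ σ * (((n:ℝ) + 1) / t₀) := by
            rw [← hWdef]
            exact mul_le_mul_of_nonneg_left htr hσ.le
          have hid : β i j * t₀ = σ * ((n:ℝ) + 1) + β i j := by
            rw [ht₀def]; field_simp
          have h2 : σ * (((n:ℝ) + 1) / t₀) < β i j := by
            rw [mul_div_assoc']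
            rw [div_lt_iff₀ ht₀]
            have : 0 ≤ σ * ((n:ℝ) + 1) := by positivity
            nlinarith
          linarith
        obtain ⟨r, hr, hgr⟩ := hIVT (-t₀) 0 (by linarith) (fun t ht => hall t ht.2)
          hgt₀ hneg
        exact ⟨r, hr.2, hall r (le_of_lt hr.2), hgr,
          fun t _ ht2 => hall t (le_of_lt ht2)⟩
      · -- bounded below case, blow-up at c
        have hc2 : c / 2 ≤ 0 := by linarith
        obtain ⟨ξ, hξ, hslope⟩ := aux_blowup_left dd c (c/2) ((1 - β i j) / σ)
          (by linarith) hdc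
          (fun t ht => hdetpos (hPD t ⟨ht.1, le_trans ht.2 hc2⟩))
        have hξIoc : ξ ∈ Set.Ioc c 0 := ⟨hξ.1, by linarith [hξ.2]⟩
        have hξ0 : ξ < 0 := by linarith [hξ.2]
        have hPDξ : (M - ξ • A).PosDef := hPD ξ hξIoc
        have hgξ : 0 < g ξ := by
          rw [hgform ξ (hdetpos hPDξ).ne']
          have h2 : σ * ((1 - β i j) / σ) ≤ σ * (dd.derivative.eval ξ / dd.eval ξ) :=
            mul_le_mul_of_nonneg_left hslope hσ.le
          have h3 : σ * ((1 - β i j) / σ) = 1 - β i j := by field_simp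
          linarith
        obtain ⟨r, hr, hgr⟩ := hIVT ξ 0 hξ0
          (fun t ht => hPD t ⟨lt_of_lt_of_le hξ.1 ht.1, ht.2⟩) hgξ hneg
        refine ⟨r, hr.2, hPD r ⟨lt_trans hξ.1 hr.1, le_of_lt hr.2⟩, hgr, ?_⟩
        intro t htr ht2
        exact hPD t ⟨lt_of_lt_of_le (lt_trans hξ.1 hr.1) htr, le_of_lt ht2⟩
    obtain ⟨r, hr0, hrPD, hgr, htail⟩ := hexZm
    have hZne : {s : ℝ | s < 0 ∧ IsUnit (M - s • A).det ∧ g s = 0}.Nonempty :=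
      ⟨r, hr0, isUnit_iff_ne_zero.mpr hrPD.det_pos.ne', hgr⟩
    have hZfin' : {s : ℝ | s < 0 ∧ IsUnit (M - s • A).det ∧ g s = 0}.Finite :=
      (hZfin hg0').subset (fun s hs => hmemroot s hs.2.1 hs.2.2)
    obtain ⟨sm, hsm⟩ := aux_isGreatest hZfin' hZne
    refine ⟨sm, hsm, ?_, ?_, hsm.1.2.2⟩
    · exact htail sm (hsm.2 ⟨hr0, isUnit_iff_ne_zero.mpr hrPD.det_pos.ne', hgr⟩) hsm.1.1
    · have := hsign i j hj
      linarith [hsm.1.1]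
end

section
/- Fix σ > 0, a point y with Q − 𝒜ᵀy positive definite, a coordinate ij, and a step length s ∈ ℝ such that Q − 𝒜ᵀy − s A_{ij} is positive definite. Let W(s) = (Q − 𝒜ᵀy − s A_{ij})⁻¹ and let w(s)_{00} be its (0,0) entry. Then s_0 = 1/w(s)_{00} − σ is the unique maximizer of the function s_0 ↦ f(y + s_0 e_0 + s e_{ij}; σ) over the set {s_0 ∈ ℝ : Q − 𝒜ᵀ(y + s_0 e_0 + s e_{ij}) positive definite}. -/
section AuxStmt11
open Matrix

lemma det_sub_smul_A0 {n : ℕ} (M : Matrix (Fin (n+1)) (Fin (n+1)) ℝ)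
    (hdet : M.det ≠ 0) (t : ℝ) :
    (M - t • A0mat n).det = M.det * (1 - t * M⁻¹ 0 0) := by
  set e : Fin (n+1) → ℝ := Pi.single 0 1 with he
  have heq : M - t • A0mat n = M.updateCol 0 ((fun k => M k 0) + (-t) • e) := by
    ext k m
    simp only [Matrix.sub_apply, Matrix.smul_apply, A0mat, smul_eq_mul, updateCol_apply, Pi.add_apply,
      Pi.smul_apply, he, Pi.single_apply]
    split_ifs <;> simp_all <;> ring
  have h1 : (M - t • A0mat n).det
      = M.det - t * (M.updateCol 0 e).det := by
    rw [heq, det_updateCol_add, det_updateCol_smul]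
    have : M.updateCol 0 (fun k => M k 0) = M := updateCol_eq_self M 0
    rw [this]; ring
  have h2 : (M.updateCol 0 e).det = M.adjugate 0 0 := by
    rw [← transpose_transpose M, updateCol_transpose, det_transpose, ← adjugate_apply,
      ← adjugate_transpose]
    simp
  have h3 : M⁻¹ 0 0 = (M.det)⁻¹ * M.adjugate 0 0 := by
    rw [inv_def, Ring.inverse_eq_inv]; simp [Matrix.smul_apply]
  rw [h1, h2, h3]
  field_simp


lemma A0_mulVec {n : ℕ} (x : Fin (n+1) → ℝ) :
    (A0mat n) *ᵥ x = Pi.single 0 (x 0) := by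
  funext k
  simp [A0mat, mulVec, dotProduct, ite_and, Pi.single_apply]

lemma dot_single {n : ℕ} (x : Fin (n+1) → ℝ) (c : ℝ) :
    x ⬝ᵥ Pi.single (0 : Fin (n+1)) c = x 0 * c := by
  simp [dotProduct, Pi.single_apply]

lemma inv00_pos {n : ℕ} {M : Matrix (Fin (n+1)) (Fin (n+1)) ℝ} (hM : M.PosDef) :
    0 < M⁻¹ 0 0 := by
  have h := hM.inv
  have h2 := h.dotProduct_mulVec_pos (x := Pi.single 0 1) (by
    intro hcon
    have := congrFun hcon 0
    simp at this)
  simpa [dotProduct, mulVec, Pi.single_apply] using h2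

lemma key_ineq {n : ℕ} {M : Matrix (Fin (n+1)) (Fin (n+1)) ℝ} (hM : M.PosDef)
    (x : Fin (n+1) → ℝ) :
    x 0 * x 0 ≤ M⁻¹ 0 0 * (x ⬝ᵥ M *ᵥ x) := by
  classical
  set w : ℝ := M⁻¹ 0 0 with hw
  have hwpos : 0 < w := inv00_pos hM
  set v : Fin (n+1) → ℝ := fun k => M⁻¹ k 0 with hv
  have hMv : M *ᵥ v = Pi.single 0 1 := by
    have hv' : v = M⁻¹ *ᵥ Pi.single 0 1 := by
      funext k; simp [hv, mulVec, dotProduct, Pi.single_apply]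
    rw [hv', mulVec_mulVec, Matrix.mul_nonsing_inv _ hM.det_pos.ne'.isUnit, one_mulVec]
  have hT : Mᵀ = M := by
    ext k m
    simpa using hM.1.apply k m
  have hsym : ∀ a b : Fin (n+1) → ℝ, a ⬝ᵥ M *ᵥ b = b ⬝ᵥ M *ᵥ a := by
    intro a b
    rw [dotProduct_mulVec, ← mulVec_transpose, hT, dotProduct_comm]
  set z : Fin (n+1) → ℝ := w • x - (x 0) • v with hz
  have hzz : 0 ≤ z ⬝ᵥ M *ᵥ z := by
    have := hM.posSemidef.dotProduct_mulVec_nonneg z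
    simpa using this
  have hexp : z ⬝ᵥ M *ᵥ z
      = w * w * (x ⬝ᵥ M *ᵥ x) - 2 * w * (x 0) * (x ⬝ᵥ M *ᵥ v) + (x 0) * (x 0) * (v ⬝ᵥ M *ᵥ v) := by
    rw [hz, mulVec_sub, mulVec_smul, mulVec_smul, sub_dotProduct, smul_dotProduct,
      smul_dotProduct, dotProduct_sub, dotProduct_sub, dotProduct_smul, dotProduct_smul,
      dotProduct_smul, dotProduct_smul, hsym v x]
    simp only [smul_eq_mul]
    ring
  have hxMv : x ⬝ᵥ M *ᵥ v = x 0 := by rw [hMv, dot_single]; ring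
  have hvMv : v ⬝ᵥ M *ᵥ v = w := by
    rw [hMv, dot_single, hv, hw]; ring
  rw [hexp, hxMv, hvMv] at hzz
  nlinarith [hzz, hwpos]

lemma quad_sub_A0 {n : ℕ} (M : Matrix (Fin (n+1)) (Fin (n+1)) ℝ) (t : ℝ)
    (x : Fin (n+1) → ℝ) :
    x ⬝ᵥ (M - t • A0mat n) *ᵥ x = x ⬝ᵥ M *ᵥ x - t * (x 0 * x 0) := by
  rw [sub_mulVec, dotProduct_sub, smul_mulVec, dotProduct_smul, A0_mulVec, dot_single]
  simp

lemma posDef_sub_smul_A0 {n : ℕ} {M : Matrix (Fin (n+1)) (Fin (n+1)) ℝ} (hM : M.PosDef)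
    {t : ℝ} (ht : t * M⁻¹ 0 0 < 1) : (M - t • A0mat n).PosDef := by
  rw [posDef_iff_dotProduct_mulVec]
  constructor
  · ext k m
    simp only [conjTranspose_apply, Matrix.sub_apply, Matrix.smul_apply, smul_eq_mul, star_trivial]
    rw [show A0mat n m k = A0mat n k m from by simp [A0mat, and_comm],
      show M m k = M k m from by simpa using hM.1.apply k m]
  · intro x hx
    have hst : star x = x := by simp
    rw [hst, quad_sub_A0]
    have hw := inv00_pos hM
    have hkey := key_ineq hM x
    by_cases hx0 : x 0 = 0
    · have := hM.dotProduct_mulVec_pos hx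
      rw [hst] at this
      rw [hx0]
      simpa using this
    · have hx0sq : 0 < x 0 * x 0 := mul_self_pos.mpr hx0
      nlinarith [hkey, hw, ht, hx0sq]

end AuxStmt11
open Matrix in
theorem stmt11 (n : ℕ) (hn : 1 ≤ n) (l u : Fin n → ℤ) (hlu : ∀ i, l i < u i)
    (β : Fin n → ℤ → ℝ) (Q : Matrix (Fin (n + 1)) (Fin (n + 1)) ℝ)
    (hQ : Q.IsHermitian) (σ : ℝ) (hσ : 0 < σ) (y0 : ℝ) (yv : Fin n → ℤ → ℝ)
    (hfeas : (Q - ATy n l u β y0 yv).PosDef)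
    (i : Fin n) (j : ℤ) (hj : j ∈ Finset.Icc (l i) (u i)) (s : ℝ)
    (hs : (Q - ATy n l u β y0 yv - s • Aconstr n l u β i j).PosDef) :
    (Q - ATy n l u β y0 yv
        - (1 / ((Q - ATy n l u β y0 yv - s • Aconstr n l u β i j)⁻¹ 0 0) - σ) • A0mat n
        - s • Aconstr n l u β i j).PosDef ∧
    ∀ t : ℝ,
      (Q - ATy n l u β y0 yv - t • A0mat n - s • Aconstr n l u β i j).PosDef →
      t ≠ 1 / ((Q - ATy n l u β y0 yv - s • Aconstr n l u β i j)⁻¹ 0 0) - σ →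
      bdot n l u β y0 yv + t + s * β i j +
          σ * Real.log
            ((Q - ATy n l u β y0 yv - t • A0mat n - s • Aconstr n l u β i j).det) <
        bdot n l u β y0 yv
          + (1 / ((Q - ATy n l u β y0 yv - s • Aconstr n l u β i j)⁻¹ 0 0) - σ)
          + s * β i j +
          σ * Real.log
            ((Q - ATy n l u β y0 yv
                - (1 / ((Q - ATy n l u β y0 yv - s • Aconstr n l u β i j)⁻¹ 0 0) - σ)
                    • A0mat n
                - s • Aconstr n l u β i j).det) := by
  
  classical
  set M := Q - ATy n l u β y0 yv - s • Aconstr n l u β i j with hM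
  have hMpd : M.PosDef := hs
  set w : ℝ := M⁻¹ 0 0 with hw
  have hwpos : 0 < w := inv00_pos hMpd
  have hdetM : 0 < M.det := hMpd.det_pos
  set t₀ : ℝ := 1 / w - σ with ht₀
  have hrearr : ∀ t : ℝ, Q - ATy n l u β y0 yv - t • A0mat n - s • Aconstr n l u β i j
      = M - t • A0mat n := by
    intro t
    rw [hM]
    abel
  have hwsig : 0 < σ * w := mul_pos hσ hwpos
  have hstar : t₀ * w < 1 := by
    rw [ht₀]
    field_simp
    nlinarith
  have hpd0 : (M - t₀ • A0mat n).PosDef := posDef_sub_smul_A0 hMpd hstar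
  refine ⟨by rw [hrearr]; exact hpd0, ?_⟩
  intro t hpd hne
  rw [hrearr] at hpd
  have hne' : t ≠ t₀ := hne
  have hdet_t : (M - t • A0mat n).det = M.det * (1 - t * w) := det_sub_smul_A0 M hdetM.ne' t
  have hdet_t0 : (M - t₀ • A0mat n).det = M.det * (1 - t₀ * w) := det_sub_smul_A0 M hdetM.ne' t₀
  have h1tw : 0 < 1 - t * w := by
    have := hpd.det_pos
    rw [hdet_t] at this
    by_contra hcon
    push_neg at hcon
    nlinarith
  have h1t0w : 1 - t₀ * w = σ * w := by
    rw [ht₀]; field_simp; ring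
  -- logarithm manipulation
  have hlog_t : Real.log (M.det * (1 - t * w)) = Real.log M.det + Real.log (1 - t * w) :=
    Real.log_mul hdetM.ne' h1tw.ne'
  have hlog_t0 : Real.log (M.det * (1 - t₀ * w)) = Real.log M.det + Real.log (σ * w) := by
    rw [h1t0w]
    exact Real.log_mul hdetM.ne' hwsig.ne'
  have hxne : (1 - t * w) / (σ * w) ≠ 1 := by
    intro hcon
    apply hne'
    have h1 : 1 - t * w = σ * w := by
      field_simp at hcon
      linarith
    rw [ht₀]
    field_simp
    linarith
  have hxpos : 0 < (1 - t * w) / (σ * w) := div_pos h1tw hwsig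
  have hlog := Real.log_lt_sub_one_of_pos hxpos hxne
  rw [Real.log_div h1tw.ne' hwsig.ne'] at hlog
  have hmul : σ * Real.log (1 - t * w) - σ * Real.log (σ * w) < t₀ - t := by
    have h2 := mul_lt_mul_of_pos_left hlog hσ
    have h3 : σ * ((1 - t * w) / (σ * w) - 1) = 1 / w - t - σ := by
      field_simp
    rw [h3] at h2
    rw [ht₀]
    linarith [h2, mul_sub σ (Real.log (1 - t * w)) (Real.log (σ * w))]
  rw [hrearr, hrearr, hdet_t, hdet_t0, hlog_t, hlog_t0]
  have hwineq : t₀ = 1 / w - σ := ht₀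
  nlinarith [hmul, hσ]
end

section
/- Let W be a real symmetric positive definite (n+1)×(n+1) matrix, v ∈ ℝ^{n+1} a nonzero vector, a ∈ ℝ with a ≠ 0, and σ > 0, β ∈ ℝ with β ≠ 0. Set A = a·vvᵀ and t = vᵀWv (so t > 0). Then for s = 1/(a t) − σ/β, the matrix W⁻¹ − sA is invertible and β − σ⟨A, (W⁻¹ − sA)⁻¹⟩ = 0, where ⟨·,·⟩ denotes the trace inner product; i.e., s is a root of the exact line-search gradient equation for a rank-one constraint matrix. -/
/-!
By Sherman–Morrison, `(W⁻¹ - k • u vᵀ)⁻¹ = W + k / (1 - k t) • (W u)(vᵀ W)` with `t = vᵀ W u`,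
whenever `1 - k t ≠ 0`; consequently `tr (u vᵀ (W⁻¹ - k • u vᵀ)⁻¹) = t / (1 - k t)`.
For `k = s a` the chosen step gives `1 - k t = a σ t / β`, so `⟨A, (W⁻¹ - s A)⁻¹⟩ = a t / (1 - k t) = β / σ`.
-/

open Matrix

namespace Matrix

variable {K m : Type*} [Field K] [Fintype m] [DecidableEq m]
  {W : Matrix m m K} (u v : m → K) {k : K}

theorem sub_smul_vecMulVec_mul_add_smul_vecMulVec (hW : IsUnit W.det)
    (hk : 1 - k * (v ⬝ᵥ W *ᵥ u) ≠ 0) :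
    (W⁻¹ - k • vecMulVec u v) *
        (W + (k / (1 - k * (v ⬝ᵥ W *ᵥ u))) • vecMulVec (W *ᵥ u) (v ᵥ* W)) = 1 := by
  set t := v ⬝ᵥ W *ᵥ u
  have hcoef : k / (1 - k * t) - k - k * (k / (1 - k * t)) * t = 0 := by
    linear_combination div_mul_cancel₀ k hk
  calc (W⁻¹ - k • vecMulVec u v) * (W + (k / (1 - k * t)) • vecMulVec (W *ᵥ u) (v ᵥ* W))
      = 1 + (k / (1 - k * t) - k - k * (k / (1 - k * t)) * t) • vecMulVec u (v ᵥ* W) := by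
        rw [sub_mul, mul_add, mul_add, nonsing_inv_mul W hW, Matrix.mul_smul, mul_vecMulVec,
          mulVec_mulVec, nonsing_inv_mul W hW, one_mulVec, smul_mul, vecMulVec_mul, smul_mul,
          Matrix.mul_smul, vecMulVec_mul_vecMulVec, vecMulVec_smul]
        module
    _ = 1 := by rw [hcoef, zero_smul, add_zero]

theorem inv_sub_smul_vecMulVec (hW : IsUnit W.det) (hk : 1 - k * (v ⬝ᵥ W *ᵥ u) ≠ 0) :
    (W⁻¹ - k • vecMulVec u v)⁻¹ =
      W + (k / (1 - k * (v ⬝ᵥ W *ᵥ u))) • vecMulVec (W *ᵥ u) (v ᵥ* W) :=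
  inv_eq_right_inv (sub_smul_vecMulVec_mul_add_smul_vecMulVec u v hW hk)

theorem isUnit_det_inv_sub_smul_vecMulVec (hW : IsUnit W.det)
    (hk : 1 - k * (v ⬝ᵥ W *ᵥ u) ≠ 0) : IsUnit (W⁻¹ - k • vecMulVec u v).det :=
  isUnit_det_of_right_inverse (sub_smul_vecMulVec_mul_add_smul_vecMulVec u v hW hk)

omit [DecidableEq m] in
theorem trace_vecMulVec_mul (M : Matrix m m K) :
    (vecMulVec u v * M).trace = v ⬝ᵥ M *ᵥ u := by
  rw [vecMulVec_mul, trace_vecMulVec, dotProduct_comm, dotProduct_mulVec]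

theorem trace_vecMulVec_mul_inv_sub_smul_vecMulVec (hW : IsUnit W.det)
    (hk : 1 - k * (v ⬝ᵥ W *ᵥ u) ≠ 0) :
    (vecMulVec u v * (W⁻¹ - k • vecMulVec u v)⁻¹).trace =
      (v ⬝ᵥ W *ᵥ u) / (1 - k * (v ⬝ᵥ W *ᵥ u)) := by
  rw [inv_sub_smul_vecMulVec u v hW hk, trace_vecMulVec_mul, add_mulVec, smul_mulVec,
    vecMulVec_mulVec, dotProduct_add, dotProduct_smul, ← dotProduct_mulVec]
  simp only [MulOpposite.smul_eq_mul_unop, MulOpposite.unop_op, dotProduct_smul, smul_eq_mul]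
  set t := v ⬝ᵥ W *ᵥ u
  have hk' : 1 - t * k ≠ 0 := by rwa [mul_comm]
  linear_combination (-t) * inv_mul_cancel₀ hk'

end Matrix

theorem stmt16 (n : ℕ) (W : Matrix (Fin (n + 1)) (Fin (n + 1)) ℝ) (hW : W.PosDef)
    (v : Fin (n + 1) → ℝ) (hv : v ≠ 0) (a : ℝ) (ha : a ≠ 0)
    (σ : ℝ) (hσ : 0 < σ) (β : ℝ) (hβ : β ≠ 0) :
    IsUnit (W⁻¹ - (1 / (a * (v ⬝ᵥ W.mulVec v)) - σ / β) • (a • Matrix.vecMulVec v v)).det ∧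
    β - σ * ((a • Matrix.vecMulVec v v) *
        (W⁻¹ - (1 / (a * (v ⬝ᵥ W.mulVec v)) - σ / β) • (a • Matrix.vecMulVec v v))⁻¹).trace
      = 0 := by
  have hWdet : IsUnit W.det := isUnit_iff_ne_zero.2 hW.det_pos.ne'
  have ht : 0 < v ⬝ᵥ W *ᵥ v := by simpa using hW.dotProduct_mulVec_pos hv
  set t := v ⬝ᵥ W *ᵥ v
  set s := 1 / (a * t) - σ / β
  have hk : 1 - s * a * t = a * σ * t / β := by
    simp only [s]
    field_simp
    ring
  have hk0 : 1 - s * a * t ≠ 0 := by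
    rw [hk]
    exact div_ne_zero (by positivity) hβ
  rw [smul_smul]
  refine ⟨isUnit_det_inv_sub_smul_vecMulVec v v hWdet hk0, ?_⟩
  rw [smul_mul, trace_smul, trace_vecMulVec_mul_inv_sub_smul_vecMulVec v v hWdet hk0, hk,
    smul_eq_mul]
  field_simp
  ring
end
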